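/- arXiv:2302.07595 — 4 statements merged into one kernel-verified Lean document; each statement's English description precedes it below -/
import Mathlib

section
/- If L ⊆ M_{n,ℓ,t} is a t-spread strongly stable set, then its t-spread shadow equals {w·x_j : w ∈ L, j ≥ max(w), w·x_j is t-spread}, where max(w) denotes the largest index of a variable dividing w. -/
open Multiset Finset

/-- A monomial in `K[x_1,…,x_n]` is encoded by the multiset of its variable
indices (each index lies in `[1, n]`).  `TSpread n d t u` says that `u` is a
t-spread monomial: its degree is at most `d`, its indices lie in `[1,n]`, and
consecutive indices `j_k ≤ j_{k+1}` of its sorted index list satisfy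
`j_{k+1} - j_k ≥ t_k` (here `t 1 = t_1, …, t (d-1) = t_{d-1}`). -/
def TSpread (n d : ℕ) (t : ℕ → ℕ) (u : Multiset ℕ) : Prop :=
  u.card ≤ d ∧ (∀ i ∈ u, 1 ≤ i ∧ i ≤ n) ∧
    ∀ k : ℕ, k + 1 < u.card →
      (u.sort (· ≤ ·)).getD k 0 + t (k + 1) ≤ (u.sort (· ≤ ·)).getD (k + 1) 0

/-- `Mset n d ℓ t` : the set `M_{n,ℓ,t}` of t-spread monomials of degree `ℓ`. -/
def Mset (n d ℓ : ℕ) (t : ℕ → ℕ) : Set (Multiset ℕ) :=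
  {u | TSpread n d t u ∧ u.card = ℓ}

/-- the t-spread shadow `Shad_t(L) = {x_i w : w ∈ L, x_i w t-spread, i = 1..n}`. -/
def Shad (n d : ℕ) (t : ℕ → ℕ) (L : Set (Multiset ℕ)) : Set (Multiset ℕ) :=
  {v | ∃ w ∈ L, ∃ i, 1 ≤ i ∧ i ≤ n ∧ v = i ::ₘ w ∧ TSpread n d t v}

/-- largest variable index dividing `u` (0 for the constant monomial). -/
def maxVar (u : Multiset ℕ) : ℕ := (u.sort (· ≤ ·)).getLastD 0

/-- `lexGE u v` : `u ≥_lex v` for monomials of equal degree, where the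
lexicographic order is induced by `x_1 > x_2 > ⋯ > x_n`. -/
def lexGE (u v : Multiset ℕ) : Prop :=
  u = v ∨ List.Lex (· < ·) (u.sort (· ≤ ·)) (v.sort (· ≤ ·))

/-- `L` is a t-spread strongly stable set. -/
def StronglyStableSet (n d : ℕ) (t : ℕ → ℕ) (L : Set (Multiset ℕ)) : Prop :=
  ∀ u ∈ L, ∀ i ∈ u, ∀ j : ℕ, 1 ≤ j → j < i →
    TSpread n d t (j ::ₘ u.erase i) → (j ::ₘ u.erase i) ∈ L

/-- `L` is a t-spread lex set (inside `M_{n,ℓ,t}`). -/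
def LexSet (n d ℓ : ℕ) (t : ℕ → ℕ) (L : Set (Multiset ℕ)) : Prop :=
  ∀ u ∈ L, ∀ v ∈ Mset n d ℓ t, lexGE v u → v ∈ L

/-- `m_i(L)` : number of monomials of `L` with largest variable index `i`. -/
noncomputable def mEq (i : ℕ) (L : Set (Multiset ℕ)) : ℕ :=
  {u ∈ L | maxVar u = i}.ncard

/-- `m_{≤ i}(L)` : number of monomials of `L` with largest variable index `≤ i`. -/
noncomputable def mLe (i : ℕ) (L : Set (Multiset ℕ)) : ℕ :=
  {u ∈ L | maxVar u ≤ i}.ncard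

/-- `I` is (the set of monomials of) a monomial ideal of `K[x_1,…,x_n]`. -/
def MonIdeal (n : ℕ) (I : Set (Multiset ℕ)) : Prop :=
  (∀ u ∈ I, ∀ i ∈ u, 1 ≤ i ∧ i ≤ n) ∧
    ∀ u ∈ I, ∀ i : ℕ, 1 ≤ i → i ≤ n → (i ::ₘ u) ∈ I

/-- `I` is generated by t-spread monomials. -/
def TSpreadGen (n d : ℕ) (t : ℕ → ℕ) (I : Set (Multiset ℕ)) : Prop :=
  ∀ u ∈ I, ∃ v ∈ I, TSpread n d t v ∧ v ≤ u

/-- The t-spread operator `a ↦ a^{(n,ℓ,t)}`:  if `a = Σ_{j=p}^{ℓ} C(a_j, j)` is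
the Macaulay expansion of `a` with respect to `ℓ`, then
`tOp t_ℓ ℓ a = Σ_{j=p+1}^{ℓ+1} C(a_{j-1} + 1 - t_ℓ, j)`, computed greedily. -/
noncomputable def tOp (s : ℕ) : ℕ → ℕ → ℕ
  | 0, _ => 0
  | ℓ + 1, a =>
    if a = 0 then 0
    else
      (sSup {b | Nat.choose b (ℓ + 1) ≤ a} + 1 - s).choose (ℓ + 2) +
        tOp s ℓ (a - Nat.choose (sSup {b | Nat.choose b (ℓ + 1) ≤ a}) (ℓ + 1))

/-- The graded Betti number `β_{i,j}(I)` of a t-spread strongly stable ideal,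
via the Eliahou–Kervaire-type formula
`β_{i,i+q}(I) = Σ_{u ∈ G(I)_q} C(max(u) - 1 - Σ_{h=1}^{q-1} t_h, i)`. -/
noncomputable def betti (t : ℕ → ℕ) (I : Set (Multiset ℕ)) (i j : ℕ) : ℕ :=
  ∑ᶠ u ∈ {u ∈ I | u.card = j - i ∧ ∀ v ∈ I, v ≤ u → v = u},
    (maxVar u - 1 - ∑ h ∈ Finset.Icc 1 (j - i - 1), t h).choose i

/-! If `x_i w` is t-spread with `i < m = max(w)`, write `x_i w = x_m · (x_i w / x_m)`. Deleting the
largest variable of a t-spread monomial leaves a t-spread monomial (the gaps of the remaining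
sorted indices are unchanged), so `x_i (w / x_m)` is t-spread and hence lies in `L` by strong
stability; its maximal index is at most `m`. -/

theorem Multiset.sort_cons_of_forall_le {α : Type*} [LinearOrder α] {a : α} {s : Multiset α}
    (hs : ∀ b ∈ s, b ≤ a) : (a ::ₘ s).sort (· ≤ ·) = s.sort (· ≤ ·) ++ [a] := by
  refine List.Perm.eq_of_pairwise' (r := (· ≤ ·)) (Multiset.pairwise_sort _ _) ?_ ?_
  · exact List.pairwise_append.2 ⟨Multiset.pairwise_sort _ _, List.pairwise_singleton _ _,
      fun b hb c hc => List.eq_of_mem_singleton hc ▸ hs b ((Multiset.mem_sort _).1 hb)⟩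
  · rw [← Multiset.coe_eq_coe, Multiset.sort_eq, ← Multiset.coe_eq_coe.2
      (List.perm_append_singleton a _).symm, ← Multiset.cons_coe, Multiset.sort_eq]

theorem maxVar_cons_of_forall_le {a : ℕ} {s : Multiset ℕ} (hs : ∀ b ∈ s, b ≤ a) :
    maxVar (a ::ₘ s) = a := by
  rw [maxVar, Multiset.sort_cons_of_forall_le hs, List.getLastD_concat]

theorem maxVar_eq_of_mem_of_forall_le {a : ℕ} {u : Multiset ℕ} (ha : a ∈ u)
    (hu : ∀ b ∈ u, b ≤ a) : maxVar u = a := by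
  rw [← Multiset.cons_erase ha]
  exact maxVar_cons_of_forall_le fun b hb => hu b (Multiset.mem_of_mem_erase hb)

theorem maxVar_mem_and_forall_le {u : Multiset ℕ} (hu : u ≠ 0) :
    maxVar u ∈ u ∧ ∀ b ∈ u, b ≤ maxVar u := by
  obtain ⟨a, ha, hmax⟩ := Multiset.exists_max_image id hu
  rw [maxVar_eq_of_mem_of_forall_le ha hmax]
  exact ⟨ha, hmax⟩

theorem maxVar_mem {u : Multiset ℕ} (hu : u ≠ 0) : maxVar u ∈ u :=
  (maxVar_mem_and_forall_le hu).1

theorem le_maxVar {u : Multiset ℕ} {b : ℕ} (hb : b ∈ u) : b ≤ maxVar u :=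
  (maxVar_mem_and_forall_le (by rintro rfl; simp at hb)).2 b hb

theorem maxVar_le {u : Multiset ℕ} {a : ℕ} (hu : ∀ b ∈ u, b ≤ a) : maxVar u ≤ a := by
  rcases eq_or_ne u 0 with rfl | h
  · simp [maxVar]
  · exact hu _ (maxVar_mem h)

theorem TSpread.of_cons_of_forall_le {n d : ℕ} {t : ℕ → ℕ} {a : ℕ} {s : Multiset ℕ}
    (hs : ∀ b ∈ s, b ≤ a) (h : TSpread n d t (a ::ₘ s)) : TSpread n d t s := by
  obtain ⟨hcard, hrange, hspread⟩ := h
  rw [Multiset.card_cons] at hcard hspread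
  refine ⟨by omega, fun i hi => hrange i (Multiset.mem_cons_of_mem hi), fun k hk => ?_⟩
  have hlen : (s.sort (· ≤ ·)).length = s.card := Multiset.length_sort _
  have := hspread k (by omega)
  rwa [Multiset.sort_cons_of_forall_le hs, List.getD_append _ _ _ _ (by omega),
    List.getD_append _ _ _ _ (by omega)] at this

theorem stmt1_general (n d : ℕ) (t : ℕ → ℕ) (L : Set (Multiset ℕ))
    (hss : StronglyStableSet n d t L) :
    Shad n d t L =
      {v | ∃ w ∈ L, ∃ j, maxVar w ≤ j ∧ v = j ::ₘ w ∧ TSpread n d t v} := by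
  ext v
  constructor
  · rintro ⟨w, hw, i, hi1, -, rfl, htv⟩
    by_cases hle : maxVar w ≤ i
    · exact ⟨w, hw, i, hle, rfl, htv⟩
    set m := maxVar w
    have hm : m ∈ w := maxVar_mem (by rintro rfl; simp [m, maxVar] at hle)
    have hbound : ∀ b ∈ i ::ₘ w.erase m, b ≤ m := by
      simp only [Multiset.mem_cons]
      rintro b (rfl | hb)
      exacts [by omega, le_maxVar (Multiset.mem_of_mem_erase hb)]
    have hv : i ::ₘ w = m ::ₘ i ::ₘ w.erase m := by
      rw [Multiset.cons_swap, Multiset.cons_erase hm]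
    rw [hv] at htv ⊢
    exact ⟨i ::ₘ w.erase m, hss w hw m hm i hi1 (by omega) (htv.of_cons_of_forall_le hbound),
      m, maxVar_le hbound, rfl, htv⟩
  · rintro ⟨w, hw, j, -, rfl, htv⟩
    obtain ⟨hj1, hjn⟩ := htv.2.1 j (Multiset.mem_cons_self _ _)
    exact ⟨w, hw, j, hj1, hjn, rfl, htv⟩

/-- for a t-spread strongly stable set `L ⊆ M_{n,ℓ,t}`,
`Shad_t(L) = {w x_j : w ∈ L, j ≥ max(w), w x_j t-spread}`. -/
theorem stmt1 (n d ℓ : ℕ) (t : ℕ → ℕ) (hd : 2 ≤ d) (hℓ : ℓ ≤ d)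
    (L : Set (Multiset ℕ)) (hLM : L ⊆ Mset n d ℓ t)
    (hss : StronglyStableSet n d t L) :
    Shad n d t L =
      {v | ∃ w ∈ L, ∃ j, maxVar w ≤ j ∧ v = j ::ₘ w ∧ TSpread n d t v} :=
  stmt1_general n d t L hss
end

section
/- If L ⊆ M_{n,ℓ,t} is a t-spread lex set, then its t-spread shadow Shad_t(L) ⊆ M_{n,ℓ+1,t} is also a t-spread lex set. -/
open Multiset Finset

/-! If `v ≥_lex x_i w` with `v` of degree `ℓ + 1` and `w ∈ L`, then dividing `v` by its largest
variable gives `v' ≥_lex w`: on sorted index lists of equal length, dropping the last entry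
preserves `≤_lex`, and among all ways of deleting one entry of a sorted list, deleting the last
one gives the lex-smallest result. Since `L` is lex, `v' ∈ L`, so `v = x_{max v} v' ∈ Shad_t(L)`. -/

namespace List

variable {α : Type*} [LinearOrder α]

theorem dropLast_le_erase {a : α} :
    ∀ {s : List α}, s.Pairwise (· ≤ ·) → a ∈ s → s.dropLast ≤ s.erase a
  | [_], _, ha => by simp_all
  | x :: y :: l, hs, ha => by
    have ih := dropLast_le_erase (a := a) (s := y :: l) hs.of_cons
    rw [dropLast_cons_cons]
    by_cases hxa : x = a
    · subst hxa
      rw [erase_cons_head]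
      rcases (rel_of_pairwise_cons hs mem_cons_self).lt_or_eq with hxy | rfl
      · exact le_of_lt (Lex.rel hxy)
      · exact cons_le_cons _ (by simpa using ih mem_cons_self)
    · rw [erase_cons_tail (by simpa using hxa)]
      exact cons_le_cons _ (ih (by simpa [Ne.symm hxa] using ha))

theorem dropLast_le_dropLast :
    ∀ {r s : List α}, r.length = s.length → r ≤ s → r.dropLast ≤ s.dropLast
  | [], [], _, _ => le_rfl
  | [_], [_], _, _ => le_rfl
  | x :: x' :: r, y :: y' :: s, hlen, hle => by
    rcases hle.lt_or_eq with hlt | heq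
    · rw [dropLast_cons_cons, dropLast_cons_cons]
      cases hlt with
      | rel h => exact le_of_lt (Lex.rel h)
      | cons h => exact cons_le_cons _ (dropLast_le_dropLast (by simpa using hlen) (le_of_lt h))
    · exact heq ▸ le_rfl
  | [], _ :: _, hlen, _ | _ :: _, [], hlen, _ | [_], _ :: _ :: _, hlen, _
  | _ :: _ :: _, [_], hlen, _ => by simp at hlen

end List

namespace Multiset

variable {α : Type*} [LinearOrder α]

theorem sort_eq_of_pairwise {u : Multiset α} {l : List α} (hl : l.Pairwise (· ≤ ·))
    (hlu : (l : Multiset α) = u) : u.sort (· ≤ ·) = l :=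
  List.Perm.eq_of_pairwise' (pairwise_sort _ _) hl (by rw [← coe_eq_coe, sort_eq, hlu])

theorem sort_erase (u : Multiset α) (a : α) :
    (u.erase a).sort (· ≤ ·) = (u.sort (· ≤ ·)).erase a :=
  sort_eq_of_pairwise ((pairwise_sort _ _).sublist List.erase_sublist) (by
    rw [← coe_erase, sort_eq])

theorem coe_dropLast (l : List α) (d : α) :
    (l.dropLast : Multiset α) = (l : Multiset α).erase (l.getLastD d) := by
  rcases List.eq_nil_or_concat l with rfl | ⟨L, b, rfl⟩
  · rfl
  · rw [List.concat_eq_append, List.dropLast_concat, List.getLastD_concat,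
      coe_eq_coe.mpr (List.perm_append_singleton b L), ← cons_coe, erase_cons_head]

end Multiset

theorem sort_erase_maxVar (u : Multiset ℕ) :
    (u.erase (maxVar u)).sort (· ≤ ·) = (u.sort (· ≤ ·)).dropLast :=
  sort_eq_of_pairwise ((Multiset.pairwise_sort _ _).sublist (List.dropLast_sublist _)) (by
    rw [coe_dropLast _ 0, Multiset.sort_eq, maxVar])

theorem TSpread.erase_maxVar {n d : ℕ} {t : ℕ → ℕ} {u : Multiset ℕ} (hu : TSpread n d t u) :
    TSpread n d t (u.erase (maxVar u)) := by
  obtain ⟨hcard, hrange, hgap⟩ := hu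
  have hlen : card (u.erase (maxVar u)) = card u - 1 := by
    rw [← Multiset.length_sort (· ≤ ·), sort_erase_maxVar, List.length_dropLast,
      Multiset.length_sort]
  refine ⟨Multiset.card_erase_le.trans hcard, fun i hi => hrange i (mem_of_mem_erase hi), ?_⟩
  intro k hk
  rw [hlen] at hk
  rw [sort_erase_maxVar, List.getD_eq_getElem?_getD, List.getD_eq_getElem?_getD,
    List.getElem?_dropLast, List.getElem?_dropLast, Multiset.length_sort, if_pos (by omega),
    if_pos hk, ← List.getD_eq_getElem?_getD, ← List.getD_eq_getElem?_getD]
  exact hgap k (by omega)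

theorem lexGE_iff_sort_le {u v : Multiset ℕ} : lexGE u v ↔ u.sort (· ≤ ·) ≤ v.sort (· ≤ ·) :=
  or_congr_left ⟨congrArg _, fun h => by
    rw [← Multiset.sort_eq u (· ≤ ·), h, Multiset.sort_eq]⟩

theorem lexGE_erase_maxVar {u v : Multiset ℕ} (hcard : card v = card u) (h : lexGE v u)
    {i : ℕ} (hi : i ∈ u) : lexGE (v.erase (maxVar v)) (u.erase i) := by
  rw [lexGE_iff_sort_le] at h ⊢
  rw [sort_erase_maxVar, sort_erase]
  calc (v.sort (· ≤ ·)).dropLast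
      ≤ (u.sort (· ≤ ·)).dropLast :=
        List.dropLast_le_dropLast (by simp only [Multiset.length_sort, hcard]) h
    _ ≤ (u.sort (· ≤ ·)).erase i :=
        List.dropLast_le_erase (Multiset.pairwise_sort _ _) ((Multiset.mem_sort _).mpr hi)

variable {n d ℓ : ℕ} {t : ℕ → ℕ} {L : Set (Multiset ℕ)}

theorem shad_subset_mset (hLM : L ⊆ Mset n d ℓ t) : Shad n d t L ⊆ Mset n d (ℓ + 1) t := by
  rintro _ ⟨w, hw, i, -, -, rfl, hspread⟩
  exact ⟨hspread, by rw [Multiset.card_cons, (hLM hw).2]⟩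

theorem LexSet.shad (hLM : L ⊆ Mset n d ℓ t) (hlex : LexSet n d ℓ t L) :
    LexSet n d (ℓ + 1) t (Shad n d t L) := by
  rintro _ ⟨w, hw, i, -, -, rfl, -⟩ v ⟨hv, hcard⟩ hge
  have hmem : maxVar v ∈ v := maxVar_mem (Multiset.card_pos.mp (by omega))
  have hv' : v.erase (maxVar v) ∈ L := by
    refine hlex w hw _ ⟨hv.erase_maxVar, by rw [card_erase_of_mem hmem, hcard]; rfl⟩ ?_
    simpa using lexGE_erase_maxVar (by rw [hcard, Multiset.card_cons, (hLM hw).2]) hge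
      (mem_cons_self i w)
  exact ⟨_, hv', maxVar v, (hv.2.1 _ hmem).1, (hv.2.1 _ hmem).2, (cons_erase hmem).symm, hv⟩

theorem stmt3_general (n d ℓ : ℕ) (t : ℕ → ℕ)
    (L : Set (Multiset ℕ)) (hLM : L ⊆ Mset n d ℓ t)
    (hlex : LexSet n d ℓ t L) :
    Shad n d t L ⊆ Mset n d (ℓ + 1) t ∧
      LexSet n d (ℓ + 1) t (Shad n d t L) :=
  ⟨shad_subset_mset hLM, hlex.shad hLM⟩

/-- the t-spread shadow of a t-spread lex set `L ⊆ M_{n,ℓ,t}`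
is a t-spread lex subset of `M_{n,ℓ+1,t}`. -/
theorem stmt3 (n d ℓ : ℕ) (t : ℕ → ℕ) (hd : 2 ≤ d) (hℓ : ℓ ≤ d)
    (L : Set (Multiset ℕ)) (hLM : L ⊆ Mset n d ℓ t)
    (hlex : LexSet n d ℓ t L) :
    Shad n d t L ⊆ Mset n d (ℓ + 1) t ∧
      LexSet n d (ℓ + 1) t (Shad n d t L) :=
  stmt3_general n d ℓ t L hLM hlex
end

section
/- If I ⊂ S is a t-spread strongly stable ideal, then there exists a unique t-spread lex ideal J ⊂ S such that f_t(I) = f_t(J), i.e., |[I_ℓ]_t| = |[J_ℓ]_t| for all 0 ≤ ℓ ≤ d. -/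
open Multiset Finset

/-!
Put `s_ℓ = |[I_ℓ]_t|` and let `J` be generated by the initial lex segments of size `s_ℓ` of
`M_{n,ℓ,t}`, for all `ℓ`. The heart of the matter is a t-spread Macaulay-type comparison: for a
strongly stable set `L` of degree `k`, the lex segment `T` with `|T| = |L|` has, for every `i`, at
most as many monomials with largest variable `≤ i` as `L`. This goes by induction on `k` and `n`:
the monomials of `L` with largest variable `x_n` are `x_n` times a strongly stable set of degree
`k - 1` in `n - t_{k-1}` variables, and the others form a strongly stable set in `n - 1` variables.
A monomial `w` of degree `k` has `n + 1 - max(w) - t_k` t-spread multiples `x_j w` with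
`j ≥ max(w)`, a decreasing function of `max(w)`, so by Abel summation `T` has at most as many such
multiples as `L`, and those of `L` lie in `[I_{k+1}]_t`. Hence each lex segment multiplies into the
next one, and `[J_ℓ]_t` is exactly the lex segment of size `s_ℓ`. Uniqueness holds because a lex
set is determined by its size and an ideal generated by t-spread monomials by its t-spread part.
-/

lemma List.le_of_forall_getD_le : ∀ {l₁ l₂ : List ℕ}, l₁.length = l₂.length →
    (∀ k < l₁.length, l₁.getD k 0 ≤ l₂.getD k 0) → l₁ ≤ l₂
  | [], [], _, _ => le_rfl
  | a :: l₁, b :: l₂, hl, h => by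
    rcases (h 0 (by simp)).lt_or_eq with hab | hab
    · exact le_of_lt (List.Lex.rel (by simpa using hab))
    · obtain rfl : a = b := by simpa using hab
      exact List.cons_le_cons a (List.le_of_forall_getD_le (by simpa using hl)
        fun k hk => by simpa using h (k + 1) (by simpa using hk))

lemma List.lex_append_iff_of_length_eq : ∀ {l₁ l₂ : List ℕ} (r₁ r₂ : List ℕ),
    l₁.length = l₂.length → l₁ ≠ l₂ →
    (List.Lex (· < ·) (l₁ ++ r₁) (l₂ ++ r₂) ↔ List.Lex (· < ·) l₁ l₂)
  | [], [], _, _, _, hne => absurd rfl hne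
  | a :: l₁, b :: l₂, r₁, r₂, hl, hne => by
    simp only [List.cons_append, List.cons_lex_cons_iff]
    refine or_congr_right (and_congr_right fun hab => ?_)
    subst hab
    exact List.lex_append_iff_of_length_eq r₁ r₂ (by simpa using hl) (by simpa using hne)

namespace TSpreadLex

open scoped Classical

section SortedMonomials

lemma sort_coe_of_pairwise {l : List ℕ} (h : l.Pairwise (· ≤ ·)) :
    (l : Multiset ℕ).sort = l := by
  rw [Multiset.coe_sort]
  exact List.mergeSort_eq_self _ h

lemma sort_injective : Function.Injective (fun u : Multiset ℕ => u.sort) := fun u v h => by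
  rw [← Multiset.sort_eq u (· ≤ ·), ← Multiset.sort_eq v (· ≤ ·)]
  exact congrArg _ h

lemma getD_le_getD_of_pairwise {l : List ℕ} (h : l.Pairwise (· ≤ ·)) {i j : ℕ} (hij : i ≤ j)
    (hj : j < l.length) : l.getD i 0 ≤ l.getD j 0 := by
  rw [List.getD_eq_getElem l 0 (lt_of_le_of_lt hij hj), List.getD_eq_getElem l 0 hj]
  exact h.rel_get_of_le hij

lemma maxVar_eq_getD (u : Multiset ℕ) : maxVar u = u.sort.getD (card u - 1) 0 := by
  rw [maxVar, ← Multiset.length_sort (· ≤ ·)]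
  rcases eq_or_ne u.sort [] with h | h
  · rw [h]; rfl
  · rw [List.getLastD_eq_getLast?, List.getLast?_eq_some_getLast h, Option.getD_some,
      List.getLast_eq_getElem, List.getD_eq_getElem _ 0]

lemma le_maxVar {a : ℕ} {u : Multiset ℕ} (ha : a ∈ u) : a ≤ maxVar u := by
  obtain ⟨i, hi, rfl⟩ := List.getElem_of_mem ((Multiset.mem_sort (· ≤ ·)).2 ha)
  rw [maxVar_eq_getD, ← List.getD_eq_getElem _ 0 hi]
  rw [Multiset.length_sort] at hi
  exact getD_le_getD_of_pairwise (Multiset.pairwise_sort _ _) (by omega)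
    (by rw [Multiset.length_sort]; omega)

lemma maxVar_mem {u : Multiset ℕ} (hu : u ≠ 0) : maxVar u ∈ u := by
  have hpos := Multiset.card_pos.2 hu
  rw [maxVar_eq_getD, ← Multiset.mem_sort (fun a b : ℕ => a ≤ b),
    List.getD_eq_getElem _ 0 (by rw [Multiset.length_sort]; omega)]
  exact List.getElem_mem _

lemma maxVar_zero : maxVar 0 = 0 := by simp [maxVar]

lemma maxVar_le_of_forall_le {u : Multiset ℕ} {i : ℕ} (h : ∀ a ∈ u, a ≤ i) : maxVar u ≤ i := by
  rcases eq_or_ne u 0 with rfl | hu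
  · exact maxVar_zero ▸ Nat.zero_le i
  · exact h _ (maxVar_mem hu)

lemma sort_cons_of_forall_le {w : Multiset ℕ} {j : ℕ} (hj : ∀ i ∈ w, i ≤ j) :
    (j ::ₘ w).sort = w.sort ++ [j] := by
  have hs : (w.sort ++ [j]).Pairwise (· ≤ ·) :=
    List.pairwise_append.2 ⟨Multiset.pairwise_sort _ _, List.pairwise_singleton _ _,
      fun a ha b hb => List.mem_singleton.1 hb ▸ hj a ((Multiset.mem_sort _).1 ha)⟩
  rw [← sort_coe_of_pairwise hs, ← Multiset.coe_add, Multiset.sort_eq, add_comm]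
  rfl

lemma maxVar_cons_of_forall_le {w : Multiset ℕ} {j : ℕ} (hj : ∀ i ∈ w, i ≤ j) :
    maxVar (j ::ₘ w) = j := by
  rw [maxVar, sort_cons_of_forall_le hj, List.getLastD_eq_getLast?, List.getLast?_append]
  simp

end SortedMonomials

section LexOrder

lemma lexGE_iff_sort_le {u v : Multiset ℕ} : lexGE u v ↔ u.sort ≤ v.sort :=
  or_congr sort_injective.eq_iff.symm Iff.rfl

lemma lexGE_refl (u : Multiset ℕ) : lexGE u u := Or.inl rfl

lemma lexGE_trans {u v w : Multiset ℕ} (h₁ : lexGE u v) (h₂ : lexGE v w) : lexGE u w :=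
  lexGE_iff_sort_le.2 ((lexGE_iff_sort_le.1 h₁).trans (lexGE_iff_sort_le.1 h₂))

lemma lexGE_antisymm {u v : Multiset ℕ} (h₁ : lexGE u v) (h₂ : lexGE v u) : u = v :=
  sort_injective ((lexGE_iff_sort_le.1 h₁).antisymm (lexGE_iff_sort_le.1 h₂))

lemma lexGE_total (u v : Multiset ℕ) : lexGE u v ∨ lexGE v u := by
  simp only [lexGE_iff_sort_le]
  exact le_total _ _

lemma lexGE_cons_iff_of_ne {w w' : Multiset ℕ} {j j' : ℕ} (hj : ∀ i ∈ w, i ≤ j)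
    (hj' : ∀ i ∈ w', i ≤ j') (hcard : card w' = card w) (hne : w' ≠ w) :
    lexGE (j' ::ₘ w') (j ::ₘ w) ↔ lexGE w' w := by
  have hne' : w'.sort ≠ w.sort := fun h => hne (sort_injective h)
  have hlen : w'.sort.length = w.sort.length := by simp [hcard]
  have hcons : j' ::ₘ w' ≠ j ::ₘ w := fun h => by
    have hjj : j' = j := by
      rw [← maxVar_cons_of_forall_le hj, ← maxVar_cons_of_forall_le hj', h]
    exact hne ((Multiset.cons_inj_right j).1 (hjj ▸ h))
  simp only [lexGE, hne, hcons, false_or, sort_cons_of_forall_le hj,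
    sort_cons_of_forall_le hj']
  exact List.lex_append_iff_of_length_eq _ _ hlen hne'

end LexOrder

section OrderStatistics

lemma getD_le_of_le_countP {l : List ℕ} (h : l.Pairwise (· ≤ ·)) {k a : ℕ}
    (hc : k + 1 ≤ l.countP (· ≤ a)) : l.getD k 0 ≤ a := by
  induction l generalizing k with
  | nil => simp at hc
  | cons b l ih =>
    by_cases hb : b ≤ a
    · cases k with
      | zero => simpa using hb
      | succ k =>
        rw [List.getD_cons_succ]
        refine ih h.of_cons ?_
        simp only [List.countP_cons, hb, decide_true, if_true] at hc
        omega
    · have hnone : l.countP (· ≤ a) = 0 := List.countP_eq_zero.2 fun x hx hxa =>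
        hb ((List.rel_of_pairwise_cons h hx).trans (by simpa using hxa))
      simp [hb, hnone] at hc

lemma succ_le_countP_getD {l : List ℕ} (h : l.Pairwise (· ≤ ·)) {k : ℕ} (hk : k < l.length) :
    k + 1 ≤ l.countP (· ≤ l.getD k 0) := by
  induction l generalizing k with
  | nil => simp at hk
  | cons b l ih =>
    cases k with
    | zero => simp
    | succ k =>
      have hk' : k < l.length := by simpa using hk
      have hb : b ≤ l.getD k 0 := List.rel_of_pairwise_cons h
        (by rw [List.getD_eq_getElem _ 0 hk']; exact List.getElem_mem _)
      have := ih h.of_cons hk'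
      simp only [List.getD_cons_succ, List.countP_cons, hb, decide_true, if_true]
      omega

lemma getD_sort_le_of_le {u v : Multiset ℕ} (h : v ≤ u) {k : ℕ} (hk : k < card v) :
    u.sort.getD k 0 ≤ v.sort.getD k 0 := by
  refine getD_le_of_le_countP (Multiset.pairwise_sort _ _) ?_
  refine (succ_le_countP_getD (Multiset.pairwise_sort _ _) (by simpa using hk)).trans ?_
  set a := v.sort.getD k 0
  have := Multiset.countP_le_of_le (· ≤ a) h
  rwa [← Multiset.sort_eq u (· ≤ ·), ← Multiset.sort_eq v (· ≤ ·), Multiset.coe_countP,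
    Multiset.coe_countP] at this

end OrderStatistics

section TSpread

variable {n d : ℕ} {t : ℕ → ℕ}

lemma tspread_of_forall_le {m : ℕ} {u : Multiset ℕ} (hu : TSpread n d t u)
    (h : ∀ a ∈ u, a ≤ m) : TSpread m d t u :=
  ⟨hu.1, fun a ha => ⟨(hu.2.1 a ha).1, h a ha⟩, hu.2.2⟩

lemma tspread_mono {m : ℕ} (hnm : n ≤ m) {u : Multiset ℕ} (hu : TSpread n d t u) :
    TSpread m d t u :=
  tspread_of_forall_le hu fun a ha => (hu.2.1 a ha).2.trans hnm

lemma maxVar_le_of_tspread {u : Multiset ℕ} (hu : TSpread n d t u) : maxVar u ≤ n :=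
  maxVar_le_of_forall_le fun a ha => (hu.2.1 a ha).2

lemma gaps_append_singleton_iff (l : List ℕ) (j : ℕ) :
    (∀ k, k + 1 < l.length + 1 →
      (l ++ [j]).getD k 0 + t (k + 1) ≤ (l ++ [j]).getD (k + 1) 0) ↔
    (∀ k, k + 1 < l.length → l.getD k 0 + t (k + 1) ≤ l.getD (k + 1) 0) ∧
      (l ≠ [] → l.getD (l.length - 1) 0 + t l.length ≤ j) := by
  have hleft : ∀ k, k < l.length → (l ++ [j]).getD k 0 = l.getD k 0 :=
    fun k hk => List.getD_append _ _ _ _ hk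
  have hlast : (l ++ [j]).getD l.length 0 = j := by simp
  constructor
  · intro h
    refine ⟨fun k hk => ?_, fun hl => ?_⟩
    · simpa only [hleft k (by omega), hleft (k + 1) hk] using h k (by omega)
    · have hpos := List.length_pos_iff.2 hl
      have := h (l.length - 1) (by omega)
      rwa [hleft _ (by omega), Nat.sub_add_cancel hpos, hlast] at this
  · rintro ⟨h, hlastGap⟩ k hk
    rcases Nat.lt_or_ge (k + 1) l.length with hlt | hge
    · rw [hleft k (by omega), hleft (k + 1) hlt]
      exact h k hlt
    · obtain rfl : k = l.length - 1 := by omega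
      have hl : l ≠ [] := List.ne_nil_of_length_pos (by omega)
      rw [hleft _ (by omega), Nat.sub_add_cancel (List.length_pos_iff.2 hl), hlast]
      exact hlastGap hl

lemma tspread_cons_iff {w : Multiset ℕ} {j : ℕ} (hj : ∀ i ∈ w, i ≤ j) :
    TSpread n d t (j ::ₘ w) ↔ TSpread n d t w ∧ (w ≠ 0 → maxVar w + t (card w) ≤ j) ∧
      1 ≤ j ∧ j ≤ n ∧ card w + 1 ≤ d := by
  have hgaps := gaps_append_singleton_iff (t := t) w.sort j
  have hnil : w.sort = [] ↔ w = 0 := by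
    rw [← List.length_eq_zero_iff, Multiset.length_sort, Multiset.card_eq_zero]
  simp only [Multiset.length_sort, ne_eq, hnil] at hgaps
  simp only [TSpread, sort_cons_of_forall_le hj, Multiset.card_cons, Multiset.mem_cons,
    forall_eq_or_imp, hgaps, maxVar_eq_getD, ne_eq]
  constructor
  · rintro ⟨hd, ⟨hj1, hw⟩, hg, hlast⟩
    exact ⟨⟨by omega, hw, hg⟩, hlast, hj1.1, hj1.2, hd⟩
  · rintro ⟨⟨-, hw, hg⟩, hlast, hj1, hjn, hd⟩
    exact ⟨hd, ⟨⟨hj1, hjn⟩, hw⟩, hg, hlast⟩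

end TSpread

noncomputable def Mfin (n d k : ℕ) (t : ℕ → ℕ) : Finset (Multiset ℕ) :=
  ((k • (Finset.Icc 1 n).val).powerset.toFinset).filter fun u => TSpread n d t u ∧ card u = k

noncomputable def lexRank (n d k : ℕ) (t : ℕ → ℕ) (u : Multiset ℕ) : ℕ :=
  #{v ∈ Mfin n d k t | lexGE v u}

noncomputable def lexSegment (n d k : ℕ) (t : ℕ → ℕ) (s : ℕ) : Finset (Multiset ℕ) :=
  {u ∈ Mfin n d k t | lexRank n d k t u ≤ s}

def IsLexSet (n d k : ℕ) (t : ℕ → ℕ) (X : Finset (Multiset ℕ)) : Prop :=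
  X ⊆ Mfin n d k t ∧ ∀ u ∈ X, ∀ v ∈ Mfin n d k t, lexGE v u → v ∈ X

def IsStronglyStable (n d k : ℕ) (t : ℕ → ℕ) (L : Finset (Multiset ℕ)) : Prop :=
  L ⊆ Mfin n d k t ∧ ∀ u ∈ L, ∀ a ∈ u, ∀ j : ℕ, 1 ≤ j → j < a →
    TSpread n d t (j ::ₘ u.erase a) → (j ::ₘ u.erase a) ∈ L

section LexSegment

variable {n d k : ℕ} {t : ℕ → ℕ}

lemma mem_Mfin {u : Multiset ℕ} : u ∈ Mfin n d k t ↔ TSpread n d t u ∧ card u = k := by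
  rw [Mfin, Finset.mem_filter, and_iff_right_iff_imp]
  rintro ⟨hu, rfl⟩
  rw [Multiset.mem_toFinset, Multiset.mem_powerset, Multiset.le_iff_count]
  intro a
  by_cases ha : a ∈ u
  · rw [Multiset.count_nsmul, Multiset.count_eq_one_of_mem (Finset.Icc 1 n).nodup
      (Finset.mem_Icc.2 (hu.2.1 a ha)), mul_one]
    exact Multiset.count_le_card a u
  · rw [Multiset.count_eq_zero_of_notMem ha]
    exact Nat.zero_le _

lemma coe_Mfin : (Mfin n d k t : Set (Multiset ℕ)) = Mset n d k t := by
  ext u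
  simp only [Finset.mem_coe, mem_Mfin]
  rfl

lemma Mfin_eq_empty (h : d < k) : Mfin n d k t = ∅ :=
  Finset.eq_empty_of_forall_notMem fun u hu => by
    have := (mem_Mfin.1 hu).1.1
    have := (mem_Mfin.1 hu).2
    omega

lemma Mfin_zero : Mfin n d 0 t = {0} := by
  ext u
  rw [mem_Mfin, Finset.mem_singleton, Multiset.card_eq_zero]
  refine ⟨And.right, ?_⟩
  rintro rfl
  exact ⟨⟨Nat.zero_le d, by simp, by simp⟩, rfl⟩

lemma Mfin_mono {m : ℕ} (h : n ≤ m) : Mfin n d k t ⊆ Mfin m d k t := fun u hu => by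
  rw [mem_Mfin] at hu ⊢
  exact ⟨tspread_mono h hu.1, hu.2⟩

lemma ne_zero_of_mem_Mfin {u : Multiset ℕ} (hu : u ∈ Mfin n d k t) (hk : 1 ≤ k) : u ≠ 0 := by
  rintro rfl
  have := (mem_Mfin.1 hu).2
  simp at this
  omega

lemma maxVar_mem_Icc_of_mem_Mfin {u : Multiset ℕ} (hu : u ∈ Mfin n d k t) (hk : 1 ≤ k) :
    maxVar u ∈ Finset.Icc 1 n :=
  Finset.mem_Icc.2 ((mem_Mfin.1 hu).1.2.1 _ (maxVar_mem (ne_zero_of_mem_Mfin hu hk)))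

lemma lexRank_pos {u : Multiset ℕ} (hu : u ∈ Mfin n d k t) : 0 < lexRank n d k t u :=
  Finset.card_pos.2 ⟨u, Finset.mem_filter.2 ⟨hu, lexGE_refl u⟩⟩

lemma lexRank_le_of_lexGE {u v : Multiset ℕ} (h : lexGE v u) :
    lexRank n d k t v ≤ lexRank n d k t u :=
  Finset.card_le_card fun _ hw => Finset.mem_filter.2
    ⟨(Finset.mem_filter.1 hw).1, lexGE_trans (Finset.mem_filter.1 hw).2 h⟩

lemma lexRank_lt_of_lexGE {u v : Multiset ℕ} (hu : u ∈ Mfin n d k t) (h : lexGE v u)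
    (hne : v ≠ u) : lexRank n d k t v < lexRank n d k t u := by
  refine Finset.card_lt_card ⟨fun w hw => Finset.mem_filter.2
    ⟨(Finset.mem_filter.1 hw).1, lexGE_trans (Finset.mem_filter.1 hw).2 h⟩, fun hsub => ?_⟩
  exact hne (lexGE_antisymm h
    (Finset.mem_filter.1 (hsub (Finset.mem_filter.2 ⟨hu, lexGE_refl u⟩))).2)

lemma lexRank_injOn : Set.InjOn (lexRank n d k t) (Mfin n d k t) := fun u hu v hv he => by
  by_contra hne
  rcases lexGE_total u v with h | h
  · exact (lexRank_lt_of_lexGE hv h hne).ne he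
  · exact (lexRank_lt_of_lexGE hu h (Ne.symm hne)).ne' he

lemma image_lexRank : (Mfin n d k t).image (lexRank n d k t) = Finset.Icc 1 #(Mfin n d k t) := by
  refine Finset.eq_of_subset_of_card_le (fun r hr => ?_) ?_
  · obtain ⟨u, hu, rfl⟩ := Finset.mem_image.1 hr
    exact Finset.mem_Icc.2 ⟨lexRank_pos hu, Finset.card_le_card (Finset.filter_subset _ _)⟩
  · rw [Finset.card_image_of_injOn lexRank_injOn, Nat.card_Icc]
    omega

lemma mem_lexSegment {s : ℕ} {u : Multiset ℕ} :
    u ∈ lexSegment n d k t s ↔ u ∈ Mfin n d k t ∧ lexRank n d k t u ≤ s :=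
  Finset.mem_filter

lemma lexSegment_subset {s : ℕ} : lexSegment n d k t s ⊆ Mfin n d k t :=
  Finset.filter_subset _ _

lemma lexSegment_mono {s s' : ℕ} (h : s ≤ s') : lexSegment n d k t s ⊆ lexSegment n d k t s' :=
  fun _ hu => mem_lexSegment.2 ⟨(mem_lexSegment.1 hu).1, (mem_lexSegment.1 hu).2.trans h⟩

lemma card_lexSegment {s : ℕ} (hs : s ≤ #(Mfin n d k t)) : #(lexSegment n d k t s) = s := by
  rw [lexSegment, ← Finset.card_image_of_injOn (lexRank_injOn.mono (Finset.filter_subset _ _)),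
    ← Finset.filter_image (p := (· ≤ s)), image_lexRank]
  have : {r ∈ Finset.Icc 1 #(Mfin n d k t) | r ≤ s} = Finset.Icc 1 s := by
    ext r
    simp only [Finset.mem_filter, Finset.mem_Icc]
    omega
  rw [this, Nat.card_Icc, Nat.add_sub_cancel]

lemma isLexSet_lexSegment {s : ℕ} : IsLexSet n d k t (lexSegment n d k t s) :=
  ⟨lexSegment_subset, fun _ hu _ hv h =>
    mem_lexSegment.2 ⟨hv, (lexRank_le_of_lexGE h).trans (mem_lexSegment.1 hu).2⟩⟩

lemma IsLexSet.eq_lexSegment {X : Finset (Multiset ℕ)} (hX : IsLexSet n d k t X) :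
    X = lexSegment n d k t #X := by
  refine Finset.eq_of_subset_of_card_le (fun u hu => mem_lexSegment.2 ⟨hX.1 hu, ?_⟩) ?_
  · exact Finset.card_le_card fun v hv =>
      hX.2 u hu v (Finset.mem_filter.1 hv).1 (Finset.mem_filter.1 hv).2
  · rw [card_lexSegment (Finset.card_le_card hX.1)]

end LexSegment

def parent (u : Multiset ℕ) : Multiset ℕ := u.erase (maxVar u)

noncomputable def childIndices (n d : ℕ) (t : ℕ → ℕ) (w : Multiset ℕ) : Finset ℕ :=
  {j ∈ Finset.Icc 1 n | (∀ i ∈ w, i ≤ j) ∧ TSpread n d t (j ::ₘ w)}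

noncomputable def children (n d : ℕ) (t : ℕ → ℕ) (X : Finset (Multiset ℕ)) :
    Finset (Multiset ℕ) :=
  X.biUnion fun w => (childIndices n d t w).image (· ::ₘ w)

section Children

variable {n d k : ℕ} {t : ℕ → ℕ}

lemma cons_maxVar_parent {u : Multiset ℕ} (hu : u ≠ 0) : maxVar u ::ₘ parent u = u :=
  Multiset.cons_erase (maxVar_mem hu)

lemma le_maxVar_of_mem_parent {u : Multiset ℕ} {i : ℕ} (hi : i ∈ parent u) : i ≤ maxVar u :=
  le_maxVar (Multiset.mem_of_mem_erase hi)

lemma card_parent {u : Multiset ℕ} (hu : u ≠ 0) : card (parent u) + 1 = card u := by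
  conv_rhs => rw [← cons_maxVar_parent hu]
  exact (Multiset.card_cons _ _).symm

lemma parent_cons {w : Multiset ℕ} {j : ℕ} (hj : ∀ i ∈ w, i ≤ j) : parent (j ::ₘ w) = w := by
  rw [parent, maxVar_cons_of_forall_le hj, Multiset.erase_cons_head]

lemma lexGE_parent {u v : Multiset ℕ} (hu : u ≠ 0) (hv : v ≠ 0) (hcard : card v = card u)
    (h : lexGE v u) : lexGE (parent v) (parent u) := by
  rcases eq_or_ne (parent v) (parent u) with he | hne
  · exact he ▸ lexGE_refl _
  · rw [← cons_maxVar_parent hu, ← cons_maxVar_parent hv] at h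
    refine (lexGE_cons_iff_of_ne (fun _ => le_maxVar_of_mem_parent)
      (fun _ => le_maxVar_of_mem_parent) ?_ hne).1 h
    have := card_parent hu
    have := card_parent hv
    omega

lemma parent_mem_Mfin {u : Multiset ℕ} (hu : u ∈ Mfin n d (k + 1) t) :
    parent u ∈ Mfin n d k t := by
  have hu0 := ne_zero_of_mem_Mfin hu le_add_self
  obtain ⟨hts, hcard⟩ := mem_Mfin.1 hu
  rw [← cons_maxVar_parent hu0, tspread_cons_iff fun _ => le_maxVar_of_mem_parent] at hts
  exact mem_Mfin.2 ⟨hts.1, by have := card_parent hu0; omega⟩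

lemma parent_mem_Mfin_sub {u : Multiset ℕ} (hu : u ∈ Mfin n d (k + 1) t) (hk : 1 ≤ k) :
    parent u ∈ Mfin (n - t k) d k t := by
  have hu0 := ne_zero_of_mem_Mfin hu le_add_self
  have hp := mem_Mfin.1 (parent_mem_Mfin hu)
  have hts := (mem_Mfin.1 hu).1
  rw [← cons_maxVar_parent hu0, tspread_cons_iff fun _ => le_maxVar_of_mem_parent] at hts
  have hgap := hts.2.1 fun h => by simp [h] at hp; omega
  rw [hp.2] at hgap
  exact mem_Mfin.2 ⟨tspread_of_forall_le hp.1 fun a ha => by have := le_maxVar ha; omega, hp.2⟩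

lemma cons_mem_Mfin {v : Multiset ℕ} (hv : v ∈ Mfin (n - t k) d k t) (hk : 1 ≤ k)
    (hkd : k + 1 ≤ d) : (n ::ₘ v) ∈ Mfin n d (k + 1) t ∧ ∀ a ∈ v, a ≤ n := by
  obtain ⟨hts, hcard⟩ := mem_Mfin.1 hv
  have hmax := Finset.mem_Icc.1 (maxVar_mem_Icc_of_mem_Mfin hv hk)
  have hle : ∀ a ∈ v, a ≤ n := fun a ha => by have := le_maxVar ha; omega
  refine ⟨mem_Mfin.2 ⟨(tspread_cons_iff hle).2 ⟨tspread_mono (Nat.sub_le n _) hts,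
    fun _ => by rw [hcard]; omega, by omega, le_rfl, by omega⟩, by simp [hcard]⟩, hle⟩

lemma mem_childIndices {w : Multiset ℕ} {j : ℕ} :
    j ∈ childIndices n d t w ↔ (1 ≤ j ∧ j ≤ n) ∧ (∀ i ∈ w, i ≤ j) ∧ TSpread n d t (j ::ₘ w) := by
  rw [childIndices, Finset.mem_filter, Finset.mem_Icc]

lemma mem_children {X : Finset (Multiset ℕ)} {v : Multiset ℕ} :
    v ∈ children n d t X ↔ ∃ w ∈ X, ∃ j ∈ childIndices n d t w, j ::ₘ w = v := by
  simp only [children, Finset.mem_biUnion, Finset.mem_image]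

lemma mem_children_of_parent_mem {X : Finset (Multiset ℕ)} {v : Multiset ℕ}
    (hv : v ∈ Mfin n d (k + 1) t) (hX : parent v ∈ X) : v ∈ children n d t X := by
  have hv0 := ne_zero_of_mem_Mfin hv (by omega)
  refine mem_children.2 ⟨parent v, hX, maxVar v, mem_childIndices.2 ⟨?_, fun _ =>
    le_maxVar_of_mem_parent, ?_⟩, cons_maxVar_parent hv0⟩
  · exact Finset.mem_Icc.1 (maxVar_mem_Icc_of_mem_Mfin hv (by omega))
  · rw [cons_maxVar_parent hv0]
    exact (mem_Mfin.1 hv).1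

lemma card_children (X : Finset (Multiset ℕ)) :
    #(children n d t X) = ∑ w ∈ X, #(childIndices n d t w) := by
  rw [children, Finset.card_biUnion]
  · refine Finset.sum_congr rfl fun w _ => Finset.card_image_of_injOn fun j hj j' hj' he => ?_
    rw [← maxVar_cons_of_forall_le (mem_childIndices.1 hj).2.1,
      ← maxVar_cons_of_forall_le (mem_childIndices.1 hj').2.1]
    exact congrArg maxVar he
  · intro w _ w' _ hne
    refine Finset.disjoint_left.2 fun v hv hv' => hne ?_
    obtain ⟨j, hj, rfl⟩ := Finset.mem_image.1 hv
    obtain ⟨j', hj', he⟩ := Finset.mem_image.1 hv'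
    rw [← parent_cons (mem_childIndices.1 hj).2.1, ← parent_cons (mem_childIndices.1 hj').2.1, he]

lemma childIndices_eq_Icc {w : Multiset ℕ} (hw : w ∈ Mfin n d k t) (hk : 1 ≤ k)
    (hkd : k + 1 ≤ d) : childIndices n d t w = Finset.Icc (maxVar w + t k) n := by
  obtain ⟨hts, hcard⟩ := mem_Mfin.1 hw
  have hw0 := ne_zero_of_mem_Mfin hw hk
  have hmax := Finset.mem_Icc.1 (maxVar_mem_Icc_of_mem_Mfin hw hk)
  ext j
  rw [mem_childIndices, Finset.mem_Icc]
  constructor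
  · rintro ⟨⟨-, hjn⟩, hle, hts'⟩
    exact ⟨hcard ▸ ((tspread_cons_iff hle).1 hts').2.1 hw0, hjn⟩
  · rintro ⟨hj, hjn⟩
    have hle : ∀ i ∈ w, i ≤ j := fun i hi => (le_maxVar hi).trans (by omega)
    exact ⟨⟨by omega, hjn⟩, hle,
      (tspread_cons_iff hle).2 ⟨hts, fun _ => hcard ▸ hj, by omega, hjn, by omega⟩⟩

lemma childIndices_eq_empty {w : Multiset ℕ} (hw : w ∈ Mfin n d k t) (hkd : d < k + 1) :
    childIndices n d t w = ∅ :=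
  Finset.eq_empty_of_forall_notMem fun j hj => by
    have := (mem_childIndices.1 hj).2.2.1
    simp [(mem_Mfin.1 hw).2] at this
    omega

lemma card_children_eq_sum {X : Finset (Multiset ℕ)} (hX : X ⊆ Mfin n d k t) (hk : 1 ≤ k) :
    #(children n d t X) = ∑ w ∈ X, if k + 1 ≤ d then n + 1 - (maxVar w + t k) else 0 := by
  rw [card_children]
  refine Finset.sum_congr rfl fun w hw => ?_
  split_ifs with hkd
  · rw [childIndices_eq_Icc (hX hw) hk hkd, Nat.card_Icc]
  · rw [childIndices_eq_empty (hX hw) (by omega), Finset.card_empty]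

end Children

section AbelSummation

lemma tsub_eq_sum_Ico_of_antitone {G : ℕ → ℕ} (hG : Antitone G) {m n : ℕ} (hmn : m ≤ n) :
    G m - G n = ∑ j ∈ Finset.Ico m n, (G j - G (j + 1)) := by
  induction n, hmn using Nat.le_induction with
  | base => simp
  | succ n hmn ih =>
    rw [Finset.sum_Ico_succ_top hmn, ← ih]
    have h₁ : G n ≤ G m := hG hmn
    have h₂ : G (n + 1) ≤ G n := hG (Nat.le_succ n)
    omega

lemma eq_sum_range_of_antitone {G : ℕ → ℕ} (hG : Antitone G) {n : ℕ} (hGn : G (n + 1) = 0)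
    (m : ℕ) : G m = ∑ j ∈ Finset.range (n + 1), if m ≤ j then G j - G (j + 1) else 0 := by
  rw [← Finset.sum_filter]
  have hfilter : {j ∈ Finset.range (n + 1) | m ≤ j} = Finset.Ico m (n + 1) := by
    ext j
    simp only [Finset.mem_filter, Finset.mem_range, Finset.mem_Ico]
    omega
  rcases le_or_gt m (n + 1) with hm | hm
  · rw [hfilter, ← tsub_eq_sum_Ico_of_antitone hG hm, hGn, Nat.sub_zero]
  · rw [hfilter, Finset.Ico_eq_empty (by omega), Finset.sum_empty]
    exact Nat.eq_zero_of_le_zero (hGn ▸ hG hm.le)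

/-- Abel summation: `∑ G (f x) = ∑_j (G j - G (j + 1)) * #{x | f x ≤ j}` with nonnegative
weights. -/
lemma sum_comp_le_sum_comp_of_card_filter_le {α : Type*} {f : α → ℕ} {X Y : Finset α}
    {G : ℕ → ℕ} (hG : Antitone G) {n : ℕ} (hGn : G (n + 1) = 0)
    (h : ∀ j ≤ n, #{x ∈ X | f x ≤ j} ≤ #{y ∈ Y | f y ≤ j}) :
    ∑ x ∈ X, G (f x) ≤ ∑ y ∈ Y, G (f y) := by
  have hsum : ∀ Z : Finset α, ∑ x ∈ Z, G (f x) =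
      ∑ j ∈ Finset.range (n + 1), (G j - G (j + 1)) * #{x ∈ Z | f x ≤ j} := fun Z => by
    simp_rw [eq_sum_range_of_antitone hG hGn (f _)]
    rw [Finset.sum_comm]
    refine Finset.sum_congr rfl fun j _ => ?_
    rw [← Finset.sum_filter, Finset.sum_const, smul_eq_mul, mul_comm]
  rw [hsum, hsum]
  exact Finset.sum_le_sum fun j hj =>
    Nat.mul_le_mul_left _ (h j (Nat.lt_succ_iff.1 (Finset.mem_range.1 hj)))

end AbelSummation

section Restriction

variable {n d k i : ℕ} {t : ℕ → ℕ}

lemma filter_maxVar_le_eq_self {X : Finset (Multiset ℕ)} (hX : X ⊆ Mfin n d k t) (hi : n ≤ i) :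
    {u ∈ X | maxVar u ≤ i} = X :=
  Finset.filter_true_of_mem fun _ hu => (maxVar_le_of_tspread (mem_Mfin.1 (hX hu)).1).trans hi

lemma card_filter_maxVar_le_add_card_filter_maxVar_eq {X : Finset (Multiset ℕ)}
    (hX : X ⊆ Mfin (n + 1) d k t) :
    #{u ∈ X | maxVar u ≤ n} + #{u ∈ X | maxVar u = n + 1} = #X := by
  rw [← Finset.card_filter_add_card_filter_not (s := X) (fun u => maxVar u ≤ n)]
  congr 2
  refine Finset.filter_congr fun u hu => ?_
  have := maxVar_le_of_tspread (mem_Mfin.1 (hX hu)).1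
  omega

lemma Mfin_filter_maxVar_le (hin : i ≤ n) : {u ∈ Mfin n d k t | maxVar u ≤ i} = Mfin i d k t := by
  ext u
  simp only [Finset.mem_filter, mem_Mfin]
  constructor
  · rintro ⟨⟨hts, hc⟩, hm⟩
    exact ⟨tspread_of_forall_le hts fun a ha => (le_maxVar ha).trans hm, hc⟩
  · rintro ⟨hts, hc⟩
    exact ⟨⟨tspread_mono hin hts, hc⟩, maxVar_le_of_tspread hts⟩

lemma IsLexSet.filter_maxVar_le {X : Finset (Multiset ℕ)} (hX : IsLexSet n d k t X)
    (hin : i ≤ n) : IsLexSet i d k t {u ∈ X | maxVar u ≤ i} := by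
  rw [IsLexSet, ← Mfin_filter_maxVar_le hin]
  refine ⟨Finset.filter_subset_filter _ hX.1, fun u hu v hv h => ?_⟩
  rw [Finset.mem_filter] at hu hv ⊢
  exact ⟨hX.2 u hu.1 v hv.1 h, hv.2⟩

lemma IsStronglyStable.filter_maxVar_le {L : Finset (Multiset ℕ)}
    (hL : IsStronglyStable n d k t L) (hin : i ≤ n) :
    IsStronglyStable i d k t {u ∈ L | maxVar u ≤ i} := by
  rw [IsStronglyStable, ← Mfin_filter_maxVar_le hin]
  refine ⟨Finset.filter_subset_filter _ hL.1, fun u hu a ha j hj hja hts => ?_⟩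
  rw [Finset.mem_filter] at hu ⊢
  refine ⟨hL.2 u hu.1 a ha j hj hja (tspread_mono hin hts),
    maxVar_le_of_forall_le fun b hb => ?_⟩
  rcases Multiset.mem_cons.1 hb with rfl | hb
  · exact (hja.trans_le (le_maxVar ha)).le.trans hu.2
  · exact (le_maxVar (Multiset.mem_of_mem_erase hb)).trans hu.2

lemma IsStronglyStable.isLexSet_of_le_one {L : Finset (Multiset ℕ)}
    (hL : IsStronglyStable n d k t L) (hk : k ≤ 1) : IsLexSet n d k t L := by
  refine ⟨hL.1, fun u hu v hv h => ?_⟩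
  rcases Nat.le_one_iff_eq_zero_or_eq_one.1 hk with rfl | rfl
  · rw [Mfin_zero, Finset.mem_singleton] at hv
    have hu0 := hL.1 hu
    rw [Mfin_zero, Finset.mem_singleton] at hu0
    rwa [hv, ← hu0]
  · obtain ⟨a, rfl⟩ := Multiset.card_eq_one.1 (mem_Mfin.1 (hL.1 hu)).2
    obtain ⟨b, rfl⟩ := Multiset.card_eq_one.1 (mem_Mfin.1 hv).2
    rcases h with h | h
    · rwa [h]
    · rw [Multiset.sort_singleton, Multiset.sort_singleton, List.lex_singleton_iff] at h
      have hb := (mem_Mfin.1 hv).1.2.1 b (Multiset.mem_singleton_self b)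
      have := hL.2 _ hu a (Multiset.mem_singleton_self a) b hb.1 h
      simp only [Multiset.erase_singleton] at this
      exact this (mem_Mfin.1 hv).1

end Restriction

noncomputable def parentsAt (n : ℕ) (X : Finset (Multiset ℕ)) : Finset (Multiset ℕ) :=
  {u ∈ X | maxVar u = n}.image parent

section ParentsAt

variable {n d k : ℕ} {t : ℕ → ℕ}

lemma mem_parentsAt {X : Finset (Multiset ℕ)} (hX : X ⊆ Mfin n d (k + 1) t) {w : Multiset ℕ} :
    w ∈ parentsAt n X ↔ n ::ₘ w ∈ X ∧ ∀ i ∈ w, i ≤ n := by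
  constructor
  · intro hw
    obtain ⟨u, hu, rfl⟩ := Finset.mem_image.1 hw
    obtain ⟨huX, rfl⟩ := Finset.mem_filter.1 hu
    have hu0 := ne_zero_of_mem_Mfin (hX huX) (by omega)
    exact ⟨(cons_maxVar_parent hu0).symm ▸ huX, fun _ => le_maxVar_of_mem_parent⟩
  · rintro ⟨hw, hle⟩
    exact Finset.mem_image.2
      ⟨_, Finset.mem_filter.2 ⟨hw, maxVar_cons_of_forall_le hle⟩, parent_cons hle⟩

lemma card_parentsAt {X : Finset (Multiset ℕ)} (hX : X ⊆ Mfin n d (k + 1) t) :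
    #(parentsAt n X) = #{u ∈ X | maxVar u = n} := by
  refine Finset.card_image_of_injOn fun u hu v hv he => ?_
  simp only [Finset.coe_filter, Set.mem_ofPred_eq] at hu hv
  rw [← cons_maxVar_parent (ne_zero_of_mem_Mfin (hX hu.1) (by omega)),
    ← cons_maxVar_parent (ne_zero_of_mem_Mfin (hX hv.1) (by omega)), hu.2, hv.2, he]

lemma parentsAt_subset {X : Finset (Multiset ℕ)} (hX : X ⊆ Mfin n d (k + 1) t) (hk : 1 ≤ k) :
    parentsAt n X ⊆ Mfin (n - t k) d k t := fun w hw => by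
  obtain ⟨hmem, hle⟩ := (mem_parentsAt hX).1 hw
  simpa [parent_cons hle] using parent_mem_Mfin_sub (hX hmem) hk

lemma children_parentsAt_subset {L : Finset (Multiset ℕ)} (hL : IsStronglyStable n d (k + 1) t L) :
    children n d t (parentsAt n L) ⊆ L := fun v hv => by
  obtain ⟨w, hw, j, hj, rfl⟩ := mem_children.1 hv
  obtain ⟨hnw, hle⟩ := (mem_parentsAt hL.1).1 hw
  obtain ⟨⟨hj1, hjn⟩, -, hts⟩ := mem_childIndices.1 hj
  rcases hjn.lt_or_eq with hjn | rfl
  · have := hL.2 _ hnw n (Multiset.mem_cons_self n w) j hj1 hjn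
    rw [Multiset.erase_cons_head] at this
    exact this hts
  · exact hnw

lemma IsStronglyStable.parentsAt {L : Finset (Multiset ℕ)} (hL : IsStronglyStable n d (k + 1) t L)
    (hk : 1 ≤ k) : IsStronglyStable (n - t k) d k t (parentsAt n L) := by
  refine ⟨parentsAt_subset hL.1 hk, fun w hw a ha j hj hja hts => ?_⟩
  obtain ⟨hnw, hle⟩ := (mem_parentsAt hL.1).1 hw
  have hcw := (mem_Mfin.1 (parentsAt_subset hL.1 hk hw)).2
  have hv : j ::ₘ w.erase a ∈ Mfin (n - t k) d k t := by
    refine mem_Mfin.2 ⟨hts, ?_⟩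
    rw [Multiset.card_cons, Multiset.card_erase_add_one ha, hcw]
  have hkd : k + 1 ≤ d := by
    have := (mem_Mfin.1 (hL.1 hnw)).1.1
    rw [Multiset.card_cons, hcw] at this
    exact this
  obtain ⟨hnv, hle'⟩ := cons_mem_Mfin hv hk hkd
  have := hL.2 _ hnw a (Multiset.mem_cons_of_mem ha) j hj hja
  rw [Multiset.erase_cons_tail_of_mem ha, Multiset.cons_swap] at this
  exact (mem_parentsAt hL.1).2 ⟨this (mem_Mfin.1 hnv).1, hle'⟩

lemma IsLexSet.parentsAt {X : Finset (Multiset ℕ)} (hX : IsLexSet n d (k + 1) t X) (hk : 1 ≤ k)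
    (hkd : k + 1 ≤ d) : IsLexSet (n - t k) d k t (parentsAt n X) := by
  refine ⟨parentsAt_subset hX.1 hk, fun w hw v hv h => ?_⟩
  obtain ⟨hnw, hle⟩ := (mem_parentsAt hX.1).1 hw
  obtain ⟨hnv, hle'⟩ := cons_mem_Mfin hv hk hkd
  refine (mem_parentsAt hX.1).2 ⟨hX.2 _ hnw _ hnv ?_, hle'⟩
  rcases eq_or_ne v w with rfl | hne
  · exact lexGE_refl _
  · refine (lexGE_cons_iff_of_ne hle hle' ?_ hne).2 h
    rw [(mem_Mfin.1 hv).2, (mem_Mfin.1 (parentsAt_subset hX.1 hk hw)).2]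

end ParentsAt

section Comparison

variable {n d k : ℕ} {t : ℕ → ℕ}

lemma children_mono {X Y : Finset (Multiset ℕ)} (h : X ⊆ Y) :
    children n d t X ⊆ children n d t Y :=
  Finset.biUnion_subset_biUnion_of_subset_left _ h

/-- Since the number of children of `w` is an antitone function of `max w`, Abel summation turns
the comparison of the counts `m_{≤ j}` into a comparison of the numbers of children. -/
lemma card_children_lexSegment_le {m : ℕ} (hmn : m ≤ n) {L : Finset (Multiset ℕ)}
    (hL : L ⊆ Mfin m d k t) (hk : 1 ≤ k)
    (hdom : ∀ j, #{u ∈ lexSegment m d k t #L | maxVar u ≤ j} ≤ #{u ∈ L | maxVar u ≤ j}) :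
    #(children n d t (lexSegment m d k t #L)) ≤ #(children n d t L) := by
  rw [card_children_eq_sum (lexSegment_subset.trans (Mfin_mono hmn)) hk,
    card_children_eq_sum (hL.trans (Mfin_mono hmn)) hk]
  refine sum_comp_le_sum_comp_of_card_filter_le (f := maxVar)
    (G := fun i => if k + 1 ≤ d then n + 1 - (i + t k) else 0) (n := n) ?_ ?_ fun j _ => hdom j
  · intro a b hab
    dsimp only
    split_ifs <;> omega
  · split_ifs <;> omega

lemma lexSet_subset_children {T E : Finset (Multiset ℕ)} (hT : IsLexSet n d (k + 1) t T)
    (hE : IsLexSet (n - t k) d k t E) {q : Multiset ℕ} (hq : q ∈ E) (hqT : n ::ₘ q ∉ T)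
    (hk : 1 ≤ k) (hkd : k + 1 ≤ d) : T ⊆ children n d t E := fun u hu => by
  have huM := hT.1 hu
  have hpu := parent_mem_Mfin_sub huM hk
  refine mem_children_of_parent_mem huM ?_
  by_contra hpE
  obtain ⟨hnq, hle⟩ := cons_mem_Mfin (hE.1 hq) hk hkd
  have hqp : lexGE q (parent u) :=
    (lexGE_total (parent u) q).resolve_left fun h => hpE (hE.2 q hq _ hpu h)
  have hcard : card q = card (parent u) := by
    rw [(mem_Mfin.1 (hE.1 hq)).2, (mem_Mfin.1 hpu).2]
  refine hqT (hT.2 u hu _ hnq ?_)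
  rw [← cons_maxVar_parent (ne_zero_of_mem_Mfin huM (by omega))]
  exact (lexGE_cons_iff_of_ne (fun _ => le_maxVar_of_mem_parent) hle hcard
    fun h => hpE (h ▸ hq)).2 hqp

lemma card_add_one_le_card_children {T E : Finset (Multiset ℕ)} (hT : IsLexSet n d (k + 1) t T)
    (hE : IsLexSet (n - t k) d k t E) {q : Multiset ℕ} (hq : q ∈ E) (hqT : n ::ₘ q ∉ T)
    (hk : 1 ≤ k) (hkd : k + 1 ≤ d) : #T + 1 ≤ #(children n d t E) := by
  obtain ⟨hnq, hle⟩ := cons_mem_Mfin (hE.1 hq) hk hkd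
  have hqE : n ::ₘ q ∈ children n d t E :=
    mem_children_of_parent_mem hnq (by rwa [parent_cons hle])
  have hsub : T ⊆ (children n d t E).erase (n ::ₘ q) := fun u hu =>
    Finset.mem_erase.2 ⟨fun h => hqT (h ▸ hu), lexSet_subset_children hT hE hq hqT hk hkd hu⟩
  have := Finset.card_le_card hsub
  rw [Finset.card_erase_of_mem hqE] at this
  have := Finset.card_pos.2 ⟨_, hqE⟩
  omega

/-- If the lex segment `T` had fewer monomials with largest variable `x_n` than `L`, the lex
segment `E` of parents one larger than that of `T` would still fit below the parents of `L`. Its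
children include `T` and `x_n q ∉ T` for the extra parent `q`, yet they are no more than the
children of the parents of `L`, which lie in `L`. -/
lemma card_filter_maxVar_eq_le {L : Finset (Multiset ℕ)} (hL : IsStronglyStable n d (k + 1) t L)
    (hk : 1 ≤ k)
    (hdom : ∀ j, #{w ∈ lexSegment (n - t k) d k t #(parentsAt n L) | maxVar w ≤ j} ≤
      #{w ∈ parentsAt n L | maxVar w ≤ j}) :
    #{u ∈ L | maxVar u = n} ≤ #{u ∈ lexSegment n d (k + 1) t #L | maxVar u = n} := by
  set T := lexSegment n d (k + 1) t #L
  set D := parentsAt n L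
  have hT : IsLexSet n d (k + 1) t T := isLexSet_lexSegment
  rw [← card_parentsAt hL.1, ← card_parentsAt hT.1]
  by_contra! hlt
  have hkd : k + 1 ≤ d := by
    by_contra h
    have : L = ∅ := Finset.subset_empty.1 (Mfin_eq_empty (n := n) (d := d) (k := k + 1) (t := t)
      (by omega) ▸ hL.1)
    simp [this, parentsAt] at hlt
  set E := lexSegment (n - t k) d k t (#(parentsAt n T) + 1)
  have hEcard : #E = #(parentsAt n T) + 1 :=
    card_lexSegment (hlt.trans_le (Finset.card_le_card (parentsAt_subset hL.1 hk)))
  have hTE : parentsAt n T ⊆ E := by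
    rw [(hT.parentsAt hk hkd).eq_lexSegment]
    exact lexSegment_mono (Nat.le_succ _)
  obtain ⟨q, hqE, hqT⟩ := Finset.exists_of_ssubset
    (Finset.ssubset_iff_subset_ne.2 ⟨hTE, fun h => by simp [← h] at hEcard⟩)
  have hnqT : n ::ₘ q ∉ T := fun h =>
    hqT ((mem_parentsAt hT.1).2 ⟨h, (cons_mem_Mfin (lexSegment_subset hqE) hk hkd).2⟩)
  have := calc #L + 1 = #T + 1 := by rw [card_lexSegment (Finset.card_le_card hL.1)]
    _ ≤ #(children n d t E) := card_add_one_le_card_children hT isLexSet_lexSegment hqE hnqT hk hkd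
    _ ≤ #(children n d t (lexSegment (n - t k) d k t #D)) :=
      Finset.card_le_card (children_mono (lexSegment_mono hlt))
    _ ≤ #(children n d t D) :=
      card_children_lexSegment_le (Nat.sub_le _ _) (parentsAt_subset hL.1 hk) hk hdom
    _ ≤ #L := Finset.card_le_card (children_parentsAt_subset hL)
  omega

lemma card_filter_lexSegment_eq_of_le {L : Finset (Multiset ℕ)} (hL : L ⊆ Mfin n d k t) {i : ℕ}
    (hi : n ≤ i) : #{u ∈ lexSegment n d k t #L | maxVar u ≤ i} = #{u ∈ L | maxVar u ≤ i} := by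
  rw [filter_maxVar_le_eq_self lexSegment_subset hi, filter_maxVar_le_eq_self hL hi,
    card_lexSegment (Finset.card_le_card hL)]

lemma card_filter_lexSegment_le_of_card_filter_maxVar_eq_le {L : Finset (Multiset ℕ)}
    (hL : IsStronglyStable (n + 1) d k t L)
    (htop : #{u ∈ L | maxVar u = n + 1} ≤ #{u ∈ lexSegment (n + 1) d k t #L | maxVar u = n + 1})
    {i : ℕ} (hi : i ≤ n)
    (ih : ∀ L', IsStronglyStable n d k t L' →
      #{u ∈ lexSegment n d k t #L' | maxVar u ≤ i} ≤ #{u ∈ L' | maxVar u ≤ i}) :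
    #{u ∈ lexSegment (n + 1) d k t #L | maxVar u ≤ i} ≤ #{u ∈ L | maxVar u ≤ i} := by
  set T := lexSegment (n + 1) d k t #L
  set T' := {u ∈ T | maxVar u ≤ n}
  set L' := {u ∈ L | maxVar u ≤ n}
  have hT'L' : #T' ≤ #L' := by
    have hsplitT : #T' + #{u ∈ T | maxVar u = n + 1} = #T :=
      card_filter_maxVar_le_add_card_filter_maxVar_eq lexSegment_subset
    have hsplitL : #L' + #{u ∈ L | maxVar u = n + 1} = #L :=
      card_filter_maxVar_le_add_card_filter_maxVar_eq hL.1
    have hTL : #T = #L := card_lexSegment (Finset.card_le_card hL.1)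
    omega
  have hT' : T' = lexSegment n d k t #T' :=
    (isLexSet_lexSegment.filter_maxVar_le n.le_succ).eq_lexSegment
  have hfilter : ∀ X : Finset (Multiset ℕ),
      {u ∈ {u ∈ X | maxVar u ≤ n} | maxVar u ≤ i} = {u ∈ X | maxVar u ≤ i} := fun X => by
    rw [Finset.filter_filter]
    exact Finset.filter_congr fun u _ => ⟨And.right, fun h => ⟨h.trans hi, h⟩⟩
  calc #{u ∈ T | maxVar u ≤ i} = #{u ∈ T' | maxVar u ≤ i} := by rw [hfilter]
    _ ≤ #{u ∈ lexSegment n d k t #L' | maxVar u ≤ i} :=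
      Finset.card_le_card (Finset.filter_subset_filter _ (hT' ▸ lexSegment_mono hT'L'))
    _ ≤ #{u ∈ L' | maxVar u ≤ i} := ih L' (hL.filter_maxVar_le n.le_succ)
    _ = #{u ∈ L | maxVar u ≤ i} := by rw [hfilter]

theorem card_filter_lexSegment_le {k : ℕ} : ∀ {n : ℕ} {L : Finset (Multiset ℕ)},
    IsStronglyStable n d k t L → ∀ i,
      #{u ∈ lexSegment n d k t #L | maxVar u ≤ i} ≤ #{u ∈ L | maxVar u ≤ i} := by
  induction k with
  | zero =>
    intro n L hL i
    rw [← (hL.isLexSet_of_le_one (Nat.zero_le 1)).eq_lexSegment]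
  | succ k ihk =>
    intro n L hL i
    rcases Nat.eq_zero_or_pos k with rfl | hk
    · rw [← (hL.isLexSet_of_le_one le_rfl).eq_lexSegment]
    induction n generalizing L i with
    | zero => exact (card_filter_lexSegment_eq_of_le hL.1 (Nat.zero_le i)).le
    | succ n ihn =>
      rcases le_or_gt (n + 1) i with hi | hi
      · exact (card_filter_lexSegment_eq_of_le hL.1 hi).le
      · exact card_filter_lexSegment_le_of_card_filter_maxVar_eq_le hL
          (card_filter_maxVar_eq_le hL hk (ihk (hL.parentsAt hk))) (by omega)
          fun L' hL' => ihn hL' i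

theorem card_children_lexSegment_le_of_isStronglyStable {L : Finset (Multiset ℕ)}
    (hL : IsStronglyStable n d k t L) :
    #(children n d t (lexSegment n d k t #L)) ≤ #(children n d t L) := by
  rcases Nat.eq_zero_or_pos k with rfl | hk
  · rw [← (hL.isLexSet_of_le_one (Nat.zero_le 1)).eq_lexSegment]
  · exact card_children_lexSegment_le le_rfl hL.1 hk (card_filter_lexSegment_le hL)

end Comparison

def lowestVars (u : Multiset ℕ) (m : ℕ) : Multiset ℕ := ↑(u.sort.take m)

section LowestVars

variable {n d : ℕ} {t : ℕ → ℕ}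

lemma sort_lowestVars (u : Multiset ℕ) (m : ℕ) : (lowestVars u m).sort = u.sort.take m :=
  sort_coe_of_pairwise ((Multiset.pairwise_sort _ _).sublist (List.take_sublist m _))

lemma card_lowestVars (u : Multiset ℕ) (m : ℕ) : card (lowestVars u m) = min m (card u) := by
  rw [lowestVars, Multiset.coe_card, List.length_take, Multiset.length_sort]

lemma lowestVars_of_card_le {u : Multiset ℕ} {m : ℕ} (hm : card u ≤ m) : lowestVars u m = u := by
  rw [lowestVars, List.take_of_length_le (by rwa [Multiset.length_sort]), Multiset.sort_eq]

lemma lowestVars_succ {u : Multiset ℕ} {m : ℕ} (hm : m < card u) :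
    lowestVars u (m + 1) = u.sort.getD m 0 ::ₘ lowestVars u m ∧
      ∀ i ∈ lowestVars u m, i ≤ u.sort.getD m 0 := by
  have hlen : m < u.sort.length := by rwa [Multiset.length_sort]
  refine ⟨?_, fun i hi => ?_⟩
  · rw [lowestVars, lowestVars, List.take_add_one, List.getElem?_eq_getElem hlen,
      Option.toList_some, ← Multiset.coe_add, add_comm, List.getD_eq_getElem _ 0 hlen]
    rfl
  · obtain ⟨p, hp, rfl⟩ := List.getElem_of_mem (Multiset.mem_coe.1 hi)
    rw [List.length_take] at hp
    rw [List.getElem_take, ← List.getD_eq_getElem _ 0]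
    exact getD_le_getD_of_pairwise (Multiset.pairwise_sort _ _) (by omega) hlen

lemma tspread_lowestVars {u : Multiset ℕ} (hu : TSpread n d t u) (m : ℕ) :
    TSpread n d t (lowestVars u m) := by
  induction h : card u - m generalizing m with
  | zero => rwa [lowestVars_of_card_le (by omega)]
  | succ r ih =>
    obtain ⟨hsucc, hle⟩ := lowestVars_succ (u := u) (m := m) (by omega)
    have := ih (m + 1) (by omega)
    rw [hsucc, tspread_cons_iff hle] at this
    exact this.1

lemma lowestVars_mem_Mfin {u : Multiset ℕ} {ℓ m : ℕ} (hu : u ∈ Mfin n d ℓ t) (hm : m ≤ ℓ) :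
    lowestVars u m ∈ Mfin n d m t :=
  mem_Mfin.2 ⟨tspread_lowestVars (mem_Mfin.1 hu).1 m,
    by rw [card_lowestVars, (mem_Mfin.1 hu).2]; omega⟩

lemma lexGE_lowestVars_of_le {u v : Multiset ℕ} (hvu : v ≤ u) :
    lexGE (lowestVars u (card v)) v := by
  have hcard : card v ≤ card u := Multiset.card_le_card hvu
  rw [lexGE_iff_sort_le, sort_lowestVars]
  refine List.le_of_forall_getD_le (by simp [hcard]) fun k hk => ?_
  simp only [List.length_take, Multiset.length_sort] at hk
  rw [List.getD_eq_getElem _ 0 (by simp; omega), List.getElem_take,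
    ← List.getD_eq_getElem _ 0]
  exact getD_sort_le_of_le hvu (by omega)

end LowestVars

section LexSegmentChain

variable {n d : ℕ} {t : ℕ → ℕ}

/-- Monomials lex-above `x_j w` have parents lex-above `w`. -/
lemma cons_mem_lexSegment {k s s' : ℕ}
    (hchild : #(children n d t (lexSegment n d k t s)) ≤ s') {w : Multiset ℕ} {j : ℕ}
    (hw : w ∈ lexSegment n d k t s) (hle : ∀ i ∈ w, i ≤ j) (hu : j ::ₘ w ∈ Mfin n d (k + 1) t) :
    j ::ₘ w ∈ lexSegment n d (k + 1) t s' := by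
  refine mem_lexSegment.2 ⟨hu, le_trans (Finset.card_le_card fun v hv => ?_) hchild⟩
  obtain ⟨hv, hvu⟩ := Finset.mem_filter.1 hv
  refine mem_children_of_parent_mem hv (isLexSet_lexSegment.2 w hw _ (parent_mem_Mfin hv) ?_)
  rw [← parent_cons hle]
  exact lexGE_parent (by simp) (ne_zero_of_mem_Mfin hv le_add_self)
    (by rw [(mem_Mfin.1 hv).2, (mem_Mfin.1 hu).2]) hvu

lemma mem_lexSegment_of_le {s : ℕ → ℕ}
    (hchild : ∀ k, #(children n d t (lexSegment n d k t (s k))) ≤ s (k + 1))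
    {m ℓ : ℕ} {u v : Multiset ℕ} (hv : v ∈ lexSegment n d m t (s m)) (hvu : v ≤ u)
    (hu : u ∈ Mfin n d ℓ t) : u ∈ lexSegment n d ℓ t (s ℓ) := by
  have hcv : card v = m := (mem_Mfin.1 (lexSegment_subset hv)).2
  have hcu : card u = ℓ := (mem_Mfin.1 hu).2
  have hml : m ≤ ℓ := hcv ▸ hcu ▸ Multiset.card_le_card hvu
  suffices h : ∀ r, m + r ≤ ℓ → lowestVars u (m + r) ∈ lexSegment n d (m + r) t (s (m + r)) by
    simpa [Nat.add_sub_cancel' hml, lowestVars_of_card_le hcu.le] using h (ℓ - m) (by omega)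
  intro r hr
  induction r with
  | zero =>
    exact isLexSet_lexSegment.2 v hv _ (lowestVars_mem_Mfin hu hml)
      (hcv ▸ lexGE_lowestVars_of_le hvu)
  | succ r ih =>
    obtain ⟨hsucc, hle⟩ := lowestVars_succ (u := u) (m := m + r) (by omega)
    rw [← add_assoc, hsucc]
    exact cons_mem_lexSegment (hchild _) (ih (by omega)) hle
      (hsucc ▸ lowestVars_mem_Mfin hu (by omega))

end LexSegmentChain

def lexIdeal (n d : ℕ) (t : ℕ → ℕ) (s : ℕ → ℕ) : Set (Multiset ℕ) :=
  {u | (∀ i ∈ u, 1 ≤ i ∧ i ≤ n) ∧ ∃ m, ∃ v ∈ lexSegment n d m t (s m), v ≤ u}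

section Ideals

variable {n d ℓ : ℕ} {t : ℕ → ℕ}

lemma inter_Mset_eq_coe_filter (J : Set (Multiset ℕ)) :
    J ∩ Mset n d ℓ t = ↑({u ∈ Mfin n d ℓ t | u ∈ J}) := by
  rw [Finset.coe_filter, ← coe_Mfin, Set.inter_comm]
  rfl

lemma _root_.MonIdeal.mem_of_le {J : Set (Multiset ℕ)} (hJ : MonIdeal n J) {u v : Multiset ℕ}
    (hv : v ∈ J) (hvu : v ≤ u) (hu : ∀ i ∈ u, 1 ≤ i ∧ i ≤ n) : u ∈ J := by
  obtain ⟨r, rfl⟩ := Multiset.le_iff_exists_add.1 hvu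
  induction r using Multiset.induction with
  | empty => simpa using hv
  | cons a r ih =>
    rw [Multiset.add_cons]
    have ha := hu a (by simp)
    exact hJ.2 _ (ih le_self_add fun i hi => hu i (by rw [Multiset.add_cons]; simp_all)) a
      ha.1 ha.2

lemma subset_of_inter_Mset_subset {J J' : Set (Multiset ℕ)} (hJ : MonIdeal n J)
    (hJ' : MonIdeal n J') (hgJ : TSpreadGen n d t J)
    (h : ∀ ℓ, J ∩ Mset n d ℓ t ⊆ J' ∩ Mset n d ℓ t) : J ⊆ J' := fun u hu => by
  obtain ⟨v, hv, hts, hvu⟩ := hgJ u hu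
  exact hJ'.mem_of_le (h (card v) ⟨hv, hts, rfl⟩).1 hvu (hJ.1 u hu)

lemma monIdeal_lexIdeal (s : ℕ → ℕ) : MonIdeal n (lexIdeal n d t s) := by
  refine ⟨fun u hu => hu.1, fun u ⟨hu, m, v, hv, hvu⟩ i hi hin =>
    ⟨fun a ha => ?_, m, v, hv, hvu.trans (Multiset.le_cons_self u i)⟩⟩
  rcases Multiset.mem_cons.1 ha with rfl | ha
  · exact ⟨hi, hin⟩
  · exact hu a ha

lemma tspreadGen_lexIdeal (s : ℕ → ℕ) : TSpreadGen n d t (lexIdeal n d t s) := by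
  rintro u ⟨-, m, v, hv, hvu⟩
  have hvM := mem_Mfin.1 (lexSegment_subset hv)
  exact ⟨v, ⟨hvM.1.2.1, m, v, hv, le_rfl⟩, hvM.1, hvu⟩

lemma lexIdeal_inter_Mset {s : ℕ → ℕ}
    (hchild : ∀ k, #(children n d t (lexSegment n d k t (s k))) ≤ s (k + 1)) (ℓ : ℕ) :
    lexIdeal n d t s ∩ Mset n d ℓ t = ↑(lexSegment n d ℓ t (s ℓ)) := by
  ext u
  rw [← coe_Mfin, Set.mem_inter_iff, Finset.mem_coe, Finset.mem_coe]
  constructor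
  · rintro ⟨⟨-, m, v, hv, hvu⟩, hu⟩
    exact mem_lexSegment_of_le hchild hv hvu hu
  · intro hu
    exact ⟨⟨(mem_Mfin.1 (lexSegment_subset hu)).1.2.1, ℓ, u, hu, le_rfl⟩, lexSegment_subset hu⟩

lemma lexSet_coe_lexSegment (s : ℕ) : LexSet n d ℓ t ↑(lexSegment n d ℓ t s) := fun u hu v hv h =>
  isLexSet_lexSegment.2 u hu v (by rwa [← coe_Mfin] at hv) h

lemma inter_Mset_eq_lexSegment {J : Set (Multiset ℕ)} (hJ : LexSet n d ℓ t (J ∩ Mset n d ℓ t))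
    {s : ℕ} (hs : ℓ ≤ d → (J ∩ Mset n d ℓ t).ncard = s) :
    J ∩ Mset n d ℓ t = ↑(lexSegment n d ℓ t s) := by
  have hX : IsLexSet n d ℓ t {u ∈ Mfin n d ℓ t | u ∈ J} := by
    refine ⟨Finset.filter_subset _ _, fun u hu v hv h => ?_⟩
    have := hJ u (by rw [inter_Mset_eq_coe_filter]; exact hu) v (by rw [← coe_Mfin]; exact hv) h
    rwa [inter_Mset_eq_coe_filter] at this
  rw [inter_Mset_eq_coe_filter, hX.eq_lexSegment]
  rcases le_or_gt ℓ d with hℓ | hℓ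
  · rw [← hs hℓ, inter_Mset_eq_coe_filter, Set.ncard_coe_finset]
  · have hempty : ∀ s', lexSegment n d ℓ t s' = ∅ := fun s' =>
      Finset.subset_empty.1 (Mfin_eq_empty hℓ ▸ lexSegment_subset)
    rw [hempty, hempty]

lemma IsStronglyStable.of_stronglyStableSet {I : Set (Multiset ℕ)} {k : ℕ}
    (hss : StronglyStableSet n d t (I ∩ Mset n d k t)) :
    IsStronglyStable n d k t {u ∈ Mfin n d k t | u ∈ I} := by
  rw [inter_Mset_eq_coe_filter] at hss
  exact ⟨Finset.filter_subset _ _, hss⟩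

lemma children_filter_subset {I : Set (Multiset ℕ)} (hI : MonIdeal n I) {k : ℕ} :
    children n d t {u ∈ Mfin n d k t | u ∈ I} ⊆ {u ∈ Mfin n d (k + 1) t | u ∈ I} := fun v hv => by
  obtain ⟨w, hw, j, hj, rfl⟩ := mem_children.1 hv
  obtain ⟨⟨hj1, hjn⟩, -, hts⟩ := mem_childIndices.1 hj
  obtain ⟨hwM, hwI⟩ := Finset.mem_filter.1 hw
  exact Finset.mem_filter.2 ⟨mem_Mfin.2 ⟨hts, by simp [(mem_Mfin.1 hwM).2]⟩, hI.2 w hwI j hj1 hjn⟩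

end Ideals

end TSpreadLex

open TSpreadLex

theorem stmt7_general (n d : ℕ) (t : ℕ → ℕ) (I : Set (Multiset ℕ))
    (hI : MonIdeal n I)
    (hss : ∀ ℓ : ℕ, StronglyStableSet n d t (I ∩ Mset n d ℓ t)) :
    ∃! J : Set (Multiset ℕ),
      MonIdeal n J ∧ TSpreadGen n d t J ∧
        (∀ ℓ : ℕ, LexSet n d ℓ t (J ∩ Mset n d ℓ t)) ∧
        ∀ ℓ ≤ d, (I ∩ Mset n d ℓ t).ncard = (J ∩ Mset n d ℓ t).ncard := by
  classical
  set L : ℕ → Finset (Multiset ℕ) := fun ℓ => {u ∈ Mfin n d ℓ t | u ∈ I}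
  have hcardI : ∀ ℓ, (I ∩ Mset n d ℓ t).ncard = #(L ℓ) := fun ℓ => by
    rw [inter_Mset_eq_coe_filter, Set.ncard_coe_finset]
  have hchild : ∀ k, #(children n d t (lexSegment n d k t #(L k))) ≤ #(L (k + 1)) := fun k =>
    (card_children_lexSegment_le_of_isStronglyStable (.of_stronglyStableSet (hss k))).trans
      (Finset.card_le_card (children_filter_subset hI))
  set J := lexIdeal n d t fun ℓ => #(L ℓ)
  have hpiece : ∀ ℓ, J ∩ Mset n d ℓ t = ↑(lexSegment n d ℓ t #(L ℓ)) :=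
    lexIdeal_inter_Mset hchild
  refine ⟨J, ⟨monIdeal_lexIdeal _, tspreadGen_lexIdeal _,
    fun ℓ => hpiece ℓ ▸ lexSet_coe_lexSegment _, fun ℓ _ => ?_⟩, ?_⟩
  · rw [hcardI, hpiece, Set.ncard_coe_finset,
      card_lexSegment (Finset.card_le_card (Finset.filter_subset _ _))]
  · rintro J' ⟨hJ'I, hJ'g, hJ'lex, hJ'card⟩
    have hpieces : ∀ ℓ, J' ∩ Mset n d ℓ t = J ∩ Mset n d ℓ t := fun ℓ => by
      rw [hpiece, inter_Mset_eq_lexSegment (hJ'lex ℓ)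
        fun hℓ => (hJ'card ℓ hℓ).symm.trans (hcardI ℓ)]
    exact Set.Subset.antisymm
      (subset_of_inter_Mset_subset hJ'I (monIdeal_lexIdeal _) hJ'g fun ℓ => (hpieces ℓ).le)
      (subset_of_inter_Mset_subset (monIdeal_lexIdeal _) hJ'I (tspreadGen_lexIdeal _)
        fun ℓ => (hpieces ℓ).ge)

/-- for any t-spread strongly stable ideal `I` there is a unique
t-spread lex ideal `J` with the same `f_t`-vector, i.e.
`|[I_ℓ]_t| = |[J_ℓ]_t|` for all `0 ≤ ℓ ≤ d`. -/
theorem stmt7 (n d : ℕ) (t : ℕ → ℕ) (hd : 2 ≤ d) (I : Set (Multiset ℕ))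
    (hI : MonIdeal n I) (hgen : TSpreadGen n d t I)
    (hss : ∀ ℓ : ℕ, StronglyStableSet n d t (I ∩ Mset n d ℓ t)) :
    ∃! J : Set (Multiset ℕ),
      MonIdeal n J ∧ TSpreadGen n d t J ∧
        (∀ ℓ : ℕ, LexSet n d ℓ t (J ∩ Mset n d ℓ t)) ∧
        ∀ ℓ ≤ d, (I ∩ Mset n d ℓ t).ncard = (J ∩ Mset n d ℓ t).ncard :=
  stmt7_general n d t I hI hss
end

section
/- Let u = x_{i_1}···x_{i_ℓ} ∈ M_{n,ℓ,t}. Then the complement of the initial t-spread lexsegment determined by u satisfies M_{n,ℓ,t} \ L_t^i(u) = ⋃_{k=1}^{ℓ} x_{i_1}···x_{i_{k-1}} · M_{[i_k+1, n], ℓ-(k-1), t_{≥k}}, and this union is disjoint. -/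
open Multiset Finset

/-! Let `s = (j_1, …, j_ℓ)` be the sorted index list of `u`. Since `v` and `u` have the same
degree, `v <_lex u` means that the sorted list of `v` agrees with `s` in the first `k - 1` places
and has an entry `b > j_k` in place `k`. Its remaining entries form a `t_{≥k}`-spread monomial in
the variables `x_{j_k + 1}, …, x_n`; conversely any such monomial completes `x_{j_1} ⋯ x_{j_{k-1}}`
to a `t`-spread monomial because `j_{k-1} + t_{k-1} ≤ j_k < b`. The place `k` of the first
difference is determined by `v`, so the union is disjoint. -/

theorem List.lt_iff_exists_eq_take_append_cons {α : Type*} [LT α] {s v : List α}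
    (hlen : s.length = v.length) :
    s < v ↔ ∃ i, ∃ hi : i < s.length, ∃ b l, v = s.take i ++ b :: l ∧ s[i] < b := by
  constructor
  · intro h
    rcases List.lt_iff_exists.mp h with ⟨-, hlt⟩ | ⟨i, hi, hiv, hagree, hlt⟩
    · omega
    refine ⟨i, hi, v[i], v.drop (i + 1), ?_, hlt⟩
    have htake : v.take i = s.take i :=
      List.ext_getElem (by simp; omega) fun j hj₁ hj₂ => by
        simp only [List.getElem_take]
        exact (hagree j (by simp at hj₁; omega)).symm
    rw [← htake, List.getElem_cons_drop, List.take_append_drop]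
  · rintro ⟨i, hi, b, l, rfl, hlt⟩
    have := List.append_left_lt (l₁ := s.take i) (List.Lex.rel (l₁ := s.drop (i + 1)) (l₂ := l) hlt)
    rwa [← List.drop_eq_getElem_cons hi, List.take_append_drop] at this

theorem Multiset.sort_coe_add {α : Type*} [LinearOrder α] {p : List α} {w : Multiset α}
    (hp : p.Pairwise (· ≤ ·)) (hpw : ∀ a ∈ p, ∀ b ∈ w, a ≤ b) :
    ((p : Multiset α) + w).sort (· ≤ ·) = p ++ w.sort (· ≤ ·) := by
  conv_lhs => rw [← Multiset.sort_eq w (· ≤ ·), Multiset.coe_add, Multiset.coe_sort]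
  refine List.mergeSort_eq_self _ (List.pairwise_append.mpr ⟨hp, Multiset.pairwise_sort _ _, ?_⟩)
  exact fun a ha b hb => hpw a ha b ((Multiset.mem_sort _).mp hb)

theorem Multiset.sort_coe_of_pairwise {α : Type*} [LinearOrder α] {l : List α}
    (hl : l.Pairwise (· ≤ ·)) : (l : Multiset α).sort (· ≤ ·) = l := by
  simpa using Multiset.sort_coe_add (w := 0) hl (by simp)

theorem Finset.map_Icc_one_val {α : Type*} (f : ℕ → α) (m : ℕ) :
    (Finset.Icc 1 m).val.map f = ↑((List.range' 1 m).map f) := by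
  rw [Nat.Icc_eq_range']; simp

theorem Multiset.sort_map_Icc_one {α : Type*} [LinearOrder α] {f : ℕ → α} {ℓ : ℕ}
    (hf : ∀ k, 1 ≤ k → k < ℓ → f k ≤ f (k + 1)) :
    ((Finset.Icc 1 ℓ).val.map f).sort (· ≤ ·) = (List.range' 1 ℓ).map f := by
  rw [Finset.map_Icc_one_val]
  refine Multiset.sort_coe_of_pairwise (List.isChain_iff_getElem.mpr fun j hj => ?_).pairwise
  simp only [List.length_map, List.length_range'] at hj
  simpa only [List.getElem_map, List.getElem_range', one_mul, ← add_assoc]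
    using hf (1 + j) (by omega) (by omega)

def SpreadList (t : ℕ → ℕ) (l : List ℕ) : Prop :=
  ∀ k, k + 1 < l.length → l.getD k 0 + t (k + 1) ≤ l.getD (k + 1) 0

theorem tSpread_iff {n d : ℕ} {t : ℕ → ℕ} {u : Multiset ℕ} :
    TSpread n d t u ↔
      u.card ≤ d ∧ (∀ i ∈ u, 1 ≤ i ∧ i ≤ n) ∧ SpreadList t (u.sort (· ≤ ·)) := by
  simp only [TSpread, SpreadList, Multiset.length_sort]

theorem spreadList_append_cons_iff {t : ℕ → ℕ} {p l : List ℕ} {b : ℕ} :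
    SpreadList t (p ++ b :: l) ↔
      SpreadList t p ∧ (∀ a ∈ p.getLast?, a + t p.length ≤ b) ∧
        SpreadList (fun m => t (m + p.length)) (b :: l) := by
  have hleft : ∀ k < p.length, (p ++ b :: l).getD k 0 = p.getD k 0 :=
    List.getD_append _ _ _
  have hright : ∀ k, (p ++ b :: l).getD (k + p.length) 0 = (b :: l).getD k 0 := fun k => by
    rw [List.getD_append_right _ _ _ _ (by omega), Nat.add_sub_cancel]
  have hlast : ∀ a ∈ p.getLast?, p.length = p.length - 1 + 1 ∧ p.getD (p.length - 1) 0 = a := by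
    intro a ha
    rw [List.getLast?_eq_getElem?, Option.mem_def] at ha
    have hpos : p.length - 1 < p.length := (List.getElem?_eq_some_iff.mp ha).1
    exact ⟨by omega, by simp [List.getD_eq_getElem?_getD, ha]⟩
  have hmid : (p ++ b :: l).getD p.length 0 = b := by simp
  constructor
  · intro h
    refine ⟨fun k hk => ?_, fun a ha => ?_, fun k hk => ?_⟩
    · have := h k (by simp; omega)
      rwa [hleft k (by omega), hleft (k + 1) hk] at this
    · obtain ⟨hlen, rfl⟩ := hlast a ha
      have := h (p.length - 1) (by simp; omega)
      rwa [hleft _ (by omega), ← hlen, hmid] at this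
    · have := h (k + p.length) (by simp at hk ⊢; omega)
      rwa [hright, Nat.add_right_comm, hright] at this
  · rintro ⟨hp, hjoin, hl⟩ k hk
    rcases lt_trichotomy (k + 1) p.length with hk' | hk' | hk'
    · rw [hleft k (by omega), hleft (k + 1) hk']
      exact hp k hk'
    · obtain ⟨a, ha⟩ : ∃ a, p.getLast? = some a :=
        Option.ne_none_iff_exists'.mp (by rw [Ne, List.getLast?_eq_none_iff]; rintro rfl; simp at hk')
      obtain ⟨-, rfl⟩ := hlast a ha
      rw [hleft k (by omega), hk', hmid, (by omega : k = p.length - 1)]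
      exact hjoin _ ha
    · obtain ⟨j, rfl⟩ : ∃ j, k = j + p.length := ⟨k - p.length, by omega⟩
      rw [hright, Nat.add_right_comm, hright]
      exact hl j (by simp at hk ⊢; omega)

/-- For `s = (j_1, …, j_ℓ)`, the piece `x_{j_1} ⋯ x_{j_i} · M_{[j_{i+1} + 1, n], ℓ - i, t_{≥ i+1}}`
of the complement of the lexsegment; `i` is `0`-based, so it is the term `k = i + 1` of the union. -/
def lexBranch (n d ℓ : ℕ) (t : ℕ → ℕ) (s : List ℕ) (i : ℕ) : Set (Multiset ℕ) :=
  (fun w => ((s.take i : List ℕ) : Multiset ℕ) + w) ''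
    {w | w ∈ Mset n (d - i) (ℓ - i) (fun m => t (m + i)) ∧ ∀ a ∈ w, s.getD i 0 + 1 ≤ a}

section LexBranch

variable {n d ℓ : ℕ} {t : ℕ → ℕ}

theorem mem_lexBranch_of_sort_eq {s : List ℕ} {i : ℕ} (hi : i ≤ s.length) {v : Multiset ℕ}
    (hv : v ∈ Mset n d ℓ t) {b : ℕ} {l : List ℕ}
    (hvsort : v.sort (· ≤ ·) = s.take i ++ b :: l) (hb : s.getD i 0 < b) :
    v ∈ lexBranch n d ℓ t s i := by
  obtain ⟨hv, hvcard⟩ := hv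
  obtain ⟨hvd, hvrange, hvspread⟩ := tSpread_iff.mp hv
  have htake_len : (s.take i).length = i := by simp; omega
  have hbl : (b :: l).Pairwise (· ≤ ·) :=
    (hvsort ▸ Multiset.pairwise_sort v _).sublist (List.sublist_append_right _ _)
  have hblen : (b :: l).length = ℓ - i := by
    have := congrArg List.length hvsort
    rw [Multiset.length_sort, List.length_append, htake_len] at this; omega
  rw [hvsort, spreadList_append_cons_iff, htake_len] at hvspread
  refine ⟨↑(b :: l), ⟨⟨tSpread_iff.mpr ⟨?_, fun x hx => ?_, ?_⟩, hblen⟩, fun a ha => ?_⟩, ?_⟩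
  · rw [Multiset.coe_card, hblen]; omega
  · exact hvrange x ((Multiset.mem_sort _).mp (hvsort ▸ List.mem_append_right _ hx))
  · rw [Multiset.sort_coe_of_pairwise hbl]; exact hvspread.2.2
  · rcases List.mem_cons.mp ha with rfl | ha
    · omega
    · have := List.rel_of_pairwise_cons hbl ha; omega
  · change ↑(s.take i) + ↑(b :: l) = v
    rw [Multiset.coe_add, ← hvsort, Multiset.sort_eq]

theorem sort_eq_take_append_cons_of_mem_lexBranch {u : Multiset ℕ} (hu : u ∈ Mset n d ℓ t)
    {i : ℕ} (hi : i < ℓ) {v : Multiset ℕ} (hv : v ∈ lexBranch n d ℓ t (u.sort (· ≤ ·)) i) :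
    v ∈ Mset n d ℓ t ∧ ∃ b l, v.sort (· ≤ ·) = (u.sort (· ≤ ·)).take i ++ b :: l ∧
      (u.sort (· ≤ ·)).getD i 0 < b := by
  obtain ⟨hu, hucard⟩ := hu
  obtain ⟨hud, hurange, huspread⟩ := tSpread_iff.mp hu
  set s := u.sort (· ≤ ·)
  have htake_len : (s.take i).length = i := by simp [s, hucard]; omega
  have hsplit : s = s.take i ++ s.getD i 0 :: s.drop (i + 1) := by
    rw [List.getD_eq_getElem _ _ (by simp [s, hucard, hi]), ← List.drop_eq_getElem_cons,
      List.take_append_drop]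
  have hsorted : s.Pairwise (· ≤ ·) := Multiset.pairwise_sort _ _
  have hpre_le : ∀ a ∈ s.take i, a ≤ s.getD i 0 := fun a ha =>
    (List.pairwise_append.mp (hsplit ▸ hsorted)).2.2 a ha _ List.mem_cons_self
  rw [hsplit, spreadList_append_cons_iff, htake_len] at huspread
  obtain ⟨hpre, hjoin, -⟩ := huspread
  obtain ⟨w, ⟨⟨hw, hwcard⟩, hwgt⟩, rfl⟩ := hv
  dsimp only
  obtain ⟨hwd, hwrange, hwspread⟩ := tSpread_iff.mp hw
  obtain ⟨b, l, hwsort⟩ : ∃ b l, w.sort (· ≤ ·) = b :: l :=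
    List.exists_cons_of_ne_nil (by rw [← List.length_pos_iff, Multiset.length_sort]; omega)
  have hb : s.getD i 0 < b := hwgt b ((Multiset.mem_sort _).mp (hwsort ▸ List.mem_cons_self))
  have hvsort : ((s.take i : List ℕ) + w : Multiset ℕ).sort (· ≤ ·) = s.take i ++ b :: l := by
    rw [Multiset.sort_coe_add (hsorted.sublist (List.take_sublist _ _))
      fun a ha c hc => (hpre_le a ha).trans (by have := hwgt c hc; omega), hwsort]
  have hvcard : ((s.take i : List ℕ) + w : Multiset ℕ).card = ℓ := by
    rw [Multiset.card_add, Multiset.coe_card, htake_len, hwcard]; omega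
  refine ⟨⟨tSpread_iff.mpr ⟨by omega, fun x hx => ?_, ?_⟩, hvcard⟩, b, l, hvsort, hb⟩
  · rcases Multiset.mem_add.mp hx with hx | hx
    · exact hurange x ((Multiset.mem_sort _).mp (List.mem_of_mem_take hx))
    · exact hwrange x hx
  · rw [hvsort, spreadList_append_cons_iff, htake_len, ← hwsort]
    exact ⟨hpre, fun a ha => (hjoin a ha).trans hb.le, hwspread⟩

theorem mem_lexBranch_iff {u : Multiset ℕ} (hu : u ∈ Mset n d ℓ t) {i : ℕ} (hi : i < ℓ)
    {v : Multiset ℕ} :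
    v ∈ lexBranch n d ℓ t (u.sort (· ≤ ·)) i ↔
      v ∈ Mset n d ℓ t ∧ ∃ b l, v.sort (· ≤ ·) = (u.sort (· ≤ ·)).take i ++ b :: l ∧
        (u.sort (· ≤ ·)).getD i 0 < b :=
  ⟨sort_eq_take_append_cons_of_mem_lexBranch hu hi, fun ⟨hv, _, _, hvsort, hb⟩ =>
    mem_lexBranch_of_sort_eq (by rw [Multiset.length_sort, hu.2]; omega) hv hvsort hb⟩

theorem not_lexGE_iff_sort_lt {u v : Multiset ℕ} :
    ¬ lexGE v u ↔ u.sort (· ≤ ·) < v.sort (· ≤ ·) := by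
  have hsort_inj : v = u ↔ v.sort (· ≤ ·) = u.sort (· ≤ ·) :=
    ⟨fun h => h ▸ rfl, fun h => by rw [← Multiset.sort_eq v (· ≤ ·), h, Multiset.sort_eq]⟩
  rw [lexGE, hsort_inj, List.lex_lt, ← le_iff_eq_or_lt, not_le]

theorem diff_lexSegment_eq_iUnion_lexBranch {u : Multiset ℕ} (hu : u ∈ Mset n d ℓ t) :
    Mset n d ℓ t \ {v ∈ Mset n d ℓ t | lexGE v u} =
      ⋃ i ∈ Finset.range ℓ, lexBranch n d ℓ t (u.sort (· ≤ ·)) i := by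
  have hslen : (u.sort (· ≤ ·)).length = ℓ := by rw [Multiset.length_sort, hu.2]
  ext v
  simp only [Set.mem_sdiff, Set.mem_sep_iff, Set.mem_iUnion, Finset.mem_range, exists_prop]
  constructor
  · rintro ⟨hv, hlex⟩
    obtain ⟨i, hi, b, l, hvsort, hb⟩ :=
      (List.lt_iff_exists_eq_take_append_cons (by rw [hslen, Multiset.length_sort, hv.2])).mp
        (not_lexGE_iff_sort_lt.mp fun h => hlex ⟨hv, h⟩)
    refine ⟨i, hslen ▸ hi, (mem_lexBranch_iff hu (hslen ▸ hi)).mpr ⟨hv, b, l, hvsort, ?_⟩⟩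
    rwa [List.getD_eq_getElem _ _ hi]
  · rintro ⟨i, hi, hv⟩
    obtain ⟨hvM, b, l, hvsort, hb⟩ := (mem_lexBranch_iff hu hi).mp hv
    refine ⟨hvM, fun ⟨_, hlex⟩ => not_lexGE_iff_sort_lt.mpr ?_ hlex⟩
    refine (List.lt_iff_exists_eq_take_append_cons (by rw [hslen, Multiset.length_sort, hvM.2])).mpr
      ⟨i, by omega, b, l, hvsort, ?_⟩
    rwa [← List.getD_eq_getElem _ 0]

theorem pairwiseDisjoint_lexBranch {u : Multiset ℕ} (hu : u ∈ Mset n d ℓ t) :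
    Set.PairwiseDisjoint ↑(Finset.range ℓ) (lexBranch n d ℓ t (u.sort (· ≤ ·))) := by
  have hslen : (u.sort (· ≤ ·)).length = ℓ := by rw [Multiset.length_sort, hu.2]
  have hlt : ∀ i j, i < j → j < ℓ →
      Disjoint (lexBranch n d ℓ t (u.sort (· ≤ ·)) i) (lexBranch n d ℓ t (u.sort (· ≤ ·)) j) := by
    intro i j hij hj
    refine Set.disjoint_left.mpr fun v hvi hvj => ?_
    obtain ⟨-, b, l, hvi, hb⟩ := (mem_lexBranch_iff hu (by omega)).mp hvi
    obtain ⟨-, _, _, hvj, -⟩ := (mem_lexBranch_iff hu hj).mp hvj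
    have hi_eq_b : (v.sort (· ≤ ·)).getD i 0 = b := by
      rw [hvi, List.getD_append_right _ _ _ _ (by simp)]
      simp [hslen, show i ≤ ℓ by omega]
    have hi_eq_s : (v.sort (· ≤ ·)).getD i 0 = (u.sort (· ≤ ·)).getD i 0 := by
      rw [hvj, List.getD_append _ _ _ _ (by simp [hslen]; omega)]
      simp [List.getD_eq_getElem?_getD, hij]
    omega
  intro i hi j hj hij
  rcases hij.lt_or_gt with h | h
  · exact hlt i j h (by simpa using hj)
  · exact (hlt j i h (by simpa using hi)).symm

end LexBranch

theorem stmt9_general (n d ℓ : ℕ) (t : ℕ → ℕ)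
    (idx : ℕ → ℕ) (u : Multiset ℕ)
    (hu : u = (Finset.Icc 1 ℓ).val.map idx)
    (hmono : ∀ k, 1 ≤ k → k < ℓ → idx k + t k ≤ idx (k + 1))
    (huM : u ∈ Mset n d ℓ t) :
    ∀ F : ℕ → Set (Multiset ℕ),
      (∀ k, F k =
        (fun w => ((Finset.Icc 1 (k - 1)).val.map idx) + w) ''
          {w | w ∈ Mset n (d - (k - 1)) (ℓ - (k - 1)) (fun m => t (m + (k - 1))) ∧
               ∀ a ∈ w, idx k + 1 ≤ a}) →
      (Mset n d ℓ t \ {v ∈ Mset n d ℓ t | lexGE v u} =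
          ⋃ k ∈ Finset.Icc 1 ℓ, F k) ∧
        ∀ k ∈ Finset.Icc 1 ℓ, ∀ k' ∈ Finset.Icc 1 ℓ, k ≠ k' →
          Disjoint (F k) (F k') := by
  intro F hF
  have hsort : u.sort (· ≤ ·) = (List.range' 1 ℓ).map idx := hu ▸
    Multiset.sort_map_Icc_one fun k hk hkℓ => (Nat.le_add_right _ _).trans (hmono k hk hkℓ)
  have hF_eq : ∀ k ∈ Finset.Icc 1 ℓ, F k = lexBranch n d ℓ t (u.sort (· ≤ ·)) (k - 1) := by
    intro k hk
    rw [Finset.mem_Icc] at hk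
    rw [hF k, lexBranch, hsort, ← List.map_take, List.take_range'_of_length_ge (by omega),
      ← Finset.map_Icc_one_val, List.getD_eq_getElem _ _ (by simp; omega)]
    simp only [List.getElem_map, List.getElem_range', one_mul, show 1 + (k - 1) = k by omega]
  refine ⟨?_, fun k hk k' hk' hne => ?_⟩
  · rw [diff_lexSegment_eq_iUnion_lexBranch huM]
    ext v
    simp only [Set.mem_iUnion, exists_prop]
    constructor
    · rintro ⟨i, hi, hv⟩
      have hk : i + 1 ∈ Finset.Icc 1 ℓ := by simp at hi ⊢; omega
      exact ⟨i + 1, hk, by rwa [hF_eq _ hk, Nat.add_sub_cancel]⟩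
    · rintro ⟨k, hk, hv⟩
      exact ⟨k - 1, by simp at hk ⊢; omega, by rwa [← hF_eq k hk]⟩
  · rw [hF_eq k hk, hF_eq k' hk']
    simp only [Finset.mem_Icc] at hk hk'
    exact pairwiseDisjoint_lexBranch huM (by simp; omega) (by simp; omega) (by omega)

/-- for `u = x_{i_1}⋯x_{i_ℓ} ∈ M_{n,ℓ,t}`,
`M_{n,ℓ,t} \ L_t^i(u) = ⋃_{k=1}^{ℓ} x_{i_1}⋯x_{i_{k-1}} · M_{[i_k+1,n], ℓ-(k-1), t_{≥k}}`,
and this union is disjoint. -/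
theorem stmt9 (n d ℓ : ℕ) (t : ℕ → ℕ) (hd : 2 ≤ d) (hℓ1 : 1 ≤ ℓ) (hℓd : ℓ ≤ d)
    (idx : ℕ → ℕ) (u : Multiset ℕ)
    (hu : u = (Finset.Icc 1 ℓ).val.map idx)
    (hmono : ∀ k, 1 ≤ k → k < ℓ → idx k + t k ≤ idx (k + 1))
    (huM : u ∈ Mset n d ℓ t) :
    ∀ F : ℕ → Set (Multiset ℕ),
      (∀ k, F k =
        (fun w => ((Finset.Icc 1 (k - 1)).val.map idx) + w) ''
          {w | w ∈ Mset n (d - (k - 1)) (ℓ - (k - 1)) (fun m => t (m + (k - 1))) ∧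
               ∀ a ∈ w, idx k + 1 ≤ a}) →
      (Mset n d ℓ t \ {v ∈ Mset n d ℓ t | lexGE v u} =
          ⋃ k ∈ Finset.Icc 1 ℓ, F k) ∧
        ∀ k ∈ Finset.Icc 1 ℓ, ∀ k' ∈ Finset.Icc 1 ℓ, k ≠ k' →
          Disjoint (F k) (F k') :=
  stmt9_general n d ℓ t idx u hu hmono huM
end
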